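/- arXiv:q-bio/0508001 — 6 statements merged into one kernel-verified Lean document; each statement's English description precedes it below -/
import Mathlib

section
/- Let T and T' be two positively edge-weighted phylogenetic X-trees inducing the same tree metric, i.e., D_T(i,j) = D_{T'}(i,j) for all i, j ∈ X. Then there is a graph isomorphism from T to T' that fixes every element of X and carries the weight of each edge of T to the weight of the corresponding edge of T'. -/
open SimpleGraph Finset

attribute [local instance] Classical.propDecidable

noncomputable section

/-!
A vertex `v` of a tree is determined by its distances to the leaves, and these distances are
determined by the leaf metric. For a leaf this is clear. An interior vertex `v` lies on the
three paths between some leaves `x`, `y`, `z` taken from three different branches at `v`, and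
then `d(a, v)` is the largest of the Gromov products `(d(a,p) + d(a,q) - d(p,q)) / 2` over
`{p, q} ⊆ {x, y, z}`: the median of `f' x`, `f' y`, `f' z` in the other tree has the same leaf
distances. Matching leaf distances is therefore a bijection, which preserves all distances
(`d(u, v)` is the maximum of `d(a, v) - d(a, u)` over leaves `a`) and hence adjacency
(`u`, `v` are adjacent iff no third vertex lies metrically between them) and edge weights.
-/

namespace SimpleGraph

theorem exists_adj_notMem_of_card_lt_degree {V : Type*} (G : SimpleGraph V) (v : V)
    [Fintype (G.neighborSet v)] {s : Finset V} (hs : #s < G.degree v) :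
    ∃ u, G.Adj v u ∧ u ∉ s := by
  obtain ⟨u, hu, hus⟩ := Finset.exists_mem_notMem_of_card_lt_card
    (hs.trans_eq (G.card_neighborFinset_eq_degree v).symm)
  exact ⟨u, (G.mem_neighborFinset v u).mp hu, hus⟩

namespace IsTree

variable {V : Type*} {G : SimpleGraph V} (hT : G.IsTree)

def path (u v : V) : G.Walk u v :=
  (hT.existsUnique_path u v).choose

theorem path_isPath (u v : V) : (hT.path u v).IsPath :=
  (hT.existsUnique_path u v).choose_spec.1

variable {hT}

theorem eq_path {u v : V} {p : G.Walk u v} (hp : p.IsPath) : p = hT.path u v :=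
  (hT.existsUnique_path u v).choose_spec.2 p hp

theorem path_of_adj {u v : V} (h : G.Adj u v) : hT.path u v = .cons h .nil :=
  (eq_path (by simp [h.ne])).symm

theorem reverse_path (u v : V) : (hT.path u v).reverse = hT.path v u :=
  eq_path (hT.path_isPath u v).reverse

theorem mem_support_path_comm {a b c : V} :
    c ∈ (hT.path a b).support ↔ c ∈ (hT.path b a).support := by
  rw [← reverse_path, Walk.support_reverse, List.mem_reverse]

theorem takeUntil_path {u v m : V} (hm : m ∈ (hT.path u v).support) :
    (hT.path u v).takeUntil m hm = hT.path u m :=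
  eq_path ((hT.path_isPath u v).takeUntil hm)

theorem exists_median (a b m : V) :
    ∃ c, c ∈ (hT.path a b).support ∧ c ∈ (hT.path a m).support ∧ c ∈ (hT.path m b).support := by
  -- `c` is the first vertex of the path from `a` to `m` that lies on the path from `m` to `b`
  obtain ⟨c, hcs, hc, hfirst⟩ := (hT.path a m).exists_mem_support_forall_mem_support_imp_eq
    (hT.path m b).support.toFinset ⟨m, by simp⟩
  rw [List.mem_toFinset] at hcs
  set q := (hT.path a m).takeUntil c hc
  set r := (hT.path m b).dropUntil c hcs
  have hr : r.IsPath := (hT.path_isPath m b).dropUntil hcs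
  have hcr : c ∉ r.support.tail := by
    have := hr.support_nodup
    rw [← r.cons_tail_support, List.nodup_cons] at this
    exact this.1
  have hqr : (q.append r).IsPath := by
    rw [Walk.isPath_def, Walk.support_append, List.nodup_append]
    refine ⟨((hT.path_isPath a m).takeUntil hc).support_nodup,
      hr.support_nodup.sublist (List.tail_sublist _), ?_⟩
    rintro x hxq _ hxr rfl
    have hxs := (hT.path m b).support_dropUntil_subset_support hcs (List.mem_of_mem_tail hxr)
    exact hcr (hfirst x (List.mem_toFinset.mpr hxs) hxq ▸ hxr)
  refine ⟨c, ?_, hc, hcs⟩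
  rw [← eq_path hqr]
  exact Walk.support_subset_support_append_left _ _ q.end_mem_support

variable (hT) in
/-- The neighbour of `u` towards `v` (and `u` itself if `v = u`): it names the branch at `u`
containing `v`. -/
def next (u v : V) : V :=
  (hT.path u v).snd

theorem adj_next {u v : V} (h : u ≠ v) : G.Adj u (hT.next u v) :=
  Walk.adj_snd (Walk.not_nil_of_ne h)

theorem next_mem_support (u v : V) : hT.next u v ∈ (hT.path u v).support :=
  Walk.getVert_mem_support _ _

theorem next_self (u : V) : hT.next u u = u := by
  rw [next, ← eq_path (Walk.IsPath.nil : (Walk.nil : G.Walk u u).IsPath)]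
  rfl

theorem next_of_adj {u v : V} (h : G.Adj u v) : hT.next u v = v :=
  (hT.isAcyclic.eq_snd_of_adj_start (hT.path_isPath u v) h (Walk.end_mem_support _)).symm

theorem next_eq_next_of_mem_support {u v c : V} (hc : c ∈ (hT.path u v).support) (hcu : c ≠ u) :
    hT.next u c = hT.next u v := by
  refine hT.isAcyclic.eq_snd_of_adj_start (hT.path_isPath u v) (adj_next hcu.symm) ?_
  have hnext := next_mem_support (hT := hT) u c
  rw [← takeUntil_path hc] at hnext
  exact (hT.path u v).support_takeUntil_subset_support hc hnext

theorem mem_support_path_of_next_ne {u a b : V} (h : hT.next u a ≠ hT.next u b) :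
    u ∈ (hT.path a b).support := by
  obtain ⟨c, hab, hau, hub⟩ := hT.exists_median a b u
  by_cases hcu : c = u
  · exact hcu ▸ hab
  · exact absurd ((next_eq_next_of_mem_support (mem_support_path_comm.mp hau) hcu).symm.trans
      (next_eq_next_of_mem_support hub hcu)) h

theorem next_ne_next_of_mem_support {v p q : V} (hv : v ∈ (hT.path p q).support) (hp : v ≠ p) :
    hT.next v p ≠ hT.next v q := by
  obtain ⟨A, B, hA, hB, hAB⟩ := (hT.path_isPath p q).mem_support_iff_exists_append.mp hv
  intro h
  have hnA : hT.next v p ∈ A.support := by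
    rw [← List.mem_reverse, ← Walk.support_reverse, eq_path hA.reverse]
    exact next_mem_support v p
  have hnB : hT.next v p ∈ B.support := h ▸ eq_path hB ▸ next_mem_support v q
  exact (hAB ▸ hT.path_isPath p q).ne_of_mem_support_of_append (adj_next hp).ne' hnA hnB rfl

theorem mem_support_path_or_mem_support_path {v p q : V} (hv : v ∈ (hT.path p q).support)
    (a : V) : v ∈ (hT.path a p).support ∨ v ∈ (hT.path a q).support := by
  by_cases hp : v = p
  · exact .inl (hp ▸ Walk.end_mem_support _)
  by_cases ha : hT.next v a = hT.next v p
  · exact .inr (mem_support_path_of_next_ne (ha ▸ next_ne_next_of_mem_support hv hp))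
  · exact .inl (mem_support_path_of_next_ne ha)

section Leaves

variable (hT) [Fintype V] {X : Type*} {f : X → V}

theorem exists_next_eq_leaf (hint : ∀ v, v ∉ Set.range f → 3 ≤ G.degree v) {v u : V}
    (h : G.Adj v u) : ∃ x, hT.next v (f x) = u := by
  -- a vertex `y` of the branch farthest from `v` is a leaf, else it has a neighbour beyond it
  obtain ⟨y, hyS, hmax⟩ := ({y | hT.next v y = u} : Finset V).exists_max_image
    (fun y => (hT.path v y).length) ⟨u, by simp [next_of_adj h]⟩
  rw [mem_filter] at hyS
  by_cases hy : y ∈ Set.range f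
  · obtain ⟨x, rfl⟩ := hy
    exact ⟨x, hyS.2⟩
  have hyv : y ≠ v := by
    rintro rfl
    exact h.ne (next_self (hT := hT) y ▸ hyS.2)
  obtain ⟨z, hyz, hz⟩ := G.exists_adj_notMem_of_card_lt_degree y (s := {hT.next y v})
    (by rw [card_singleton]; linarith [hint y hy])
  have hy_mem : y ∈ (hT.path v z).support :=
    mem_support_path_of_next_ne (by rw [next_of_adj hyz]; simpa [eq_comm] using hz)
  have hzu : hT.next v z = u := (next_eq_next_of_mem_support hy_mem hyv).symm.trans hyS.2
  have hlt : (hT.path v y).length < (hT.path v z).length := by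
    rw [← takeUntil_path hy_mem]
    exact Walk.length_takeUntil_lt_length _ hyz.ne
  exact ((hmax z (by simp [hzu])).not_gt hlt).elim

theorem exists_leaf_mem_support_path (hint : ∀ v, v ∉ Set.range f → 3 ≤ G.degree v) (p q : V) :
    ∃ x, p ∈ (hT.path (f x) q).support := by
  by_cases hp : p ∈ Set.range f
  · obtain ⟨x, rfl⟩ := hp
    exact ⟨x, Walk.start_mem_support _⟩
  obtain ⟨t, hpt, ht⟩ := G.exists_adj_notMem_of_card_lt_degree p (s := {hT.next p q})
    (by rw [card_singleton]; linarith [hint p hp])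
  obtain ⟨x, rfl⟩ := hT.exists_next_eq_leaf hint hpt
  exact ⟨x, mem_support_path_of_next_ne (by simpa using ht)⟩

theorem exists_leaves_mem_support_path (hint : ∀ v, v ∉ Set.range f → 3 ≤ G.degree v) {v : V}
    (hv : v ∉ Set.range f) : ∃ x y z, v ∈ (hT.path (f x) (f y)).support ∧
      v ∈ (hT.path (f x) (f z)).support ∧ v ∈ (hT.path (f y) (f z)).support := by
  have hdeg := hint v hv
  obtain ⟨u₁, h₁, -⟩ := G.exists_adj_notMem_of_card_lt_degree v (s := ∅)
    (by rw [card_empty]; omega)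
  obtain ⟨u₂, h₂, hu₂⟩ := G.exists_adj_notMem_of_card_lt_degree v (s := {u₁})
    (by rw [card_singleton]; omega)
  obtain ⟨u₃, h₃, hu₃⟩ := G.exists_adj_notMem_of_card_lt_degree v (s := {u₁, u₂})
    (card_le_two.trans_lt (by omega))
  obtain ⟨x, rfl⟩ := hT.exists_next_eq_leaf hint h₁
  obtain ⟨y, rfl⟩ := hT.exists_next_eq_leaf hint h₂
  obtain ⟨z, rfl⟩ := hT.exists_next_eq_leaf hint h₃
  simp only [mem_insert, mem_singleton, not_or] at hu₂ hu₃
  exact ⟨x, y, z, mem_support_path_of_next_ne (Ne.symm hu₂),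
    mem_support_path_of_next_ne (Ne.symm hu₃.1), mem_support_path_of_next_ne (Ne.symm hu₃.2)⟩

end Leaves

section Weighted

variable (hT)

def wdist (w : Sym2 V → ℝ) (u v : V) : ℝ :=
  ((hT.path u v).edges.map w).sum

variable (w : Sym2 V → ℝ)

theorem wdist_eq_sum {u v : V} {p : G.Walk u v} (hp : p.IsPath) :
    hT.wdist w u v = (p.edges.map w).sum := by
  rw [eq_path hp, wdist]

theorem wdist_self (u : V) : hT.wdist w u u = 0 := by
  simp [hT.wdist_eq_sum w (Walk.IsPath.nil : (Walk.nil : G.Walk u u).IsPath)]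

theorem wdist_comm (u v : V) : hT.wdist w u v = hT.wdist w v u := by
  rw [wdist, ← reverse_path, Walk.edges_reverse, List.map_reverse, List.sum_reverse, wdist]

theorem wdist_of_adj {u v : V} (h : G.Adj u v) : hT.wdist w u v = w s(u, v) := by
  simp [wdist, path_of_adj h]

variable {w}

theorem wdist_eq_add_of_mem_support {u v m : V} (hm : m ∈ (hT.path u v).support) :
    hT.wdist w u v = hT.wdist w u m + hT.wdist w m v := by
  rw [hT.wdist_eq_sum w ((hT.path_isPath u v).takeUntil hm),
    hT.wdist_eq_sum w ((hT.path_isPath u v).dropUntil hm), ← List.sum_append, ← List.map_append,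
    ← Walk.edges_append, Walk.take_spec, wdist]

theorem wdist_nonneg (hw : ∀ e ∈ G.edgeSet, 0 < w e) (u v : V) : 0 ≤ hT.wdist w u v :=
  List.sum_nonneg fun _ hr => by
    obtain ⟨e, he, rfl⟩ := List.mem_map.mp hr
    exact (hw e ((hT.path u v).edges_subset_edgeSet he)).le

theorem wdist_pos (hw : ∀ e ∈ G.edgeSet, 0 < w e) {u v : V} (h : u ≠ v) :
    0 < hT.wdist w u v := by
  refine List.sum_pos _ (fun _ hr => ?_) ?_
  · obtain ⟨e, he, rfl⟩ := List.mem_map.mp hr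
    exact hw e ((hT.path u v).edges_subset_edgeSet he)
  · simpa [Walk.edges_eq_nil] using Walk.not_nil_of_ne h

theorem wdist_eq_zero_iff (hw : ∀ e ∈ G.edgeSet, 0 < w e) {u v : V} :
    hT.wdist w u v = 0 ↔ u = v :=
  ⟨fun h => by_contra fun huv => (hT.wdist_pos hw huv).ne' h, fun h => h ▸ hT.wdist_self w u⟩

theorem mem_support_path_iff_wdist_eq_add (hw : ∀ e ∈ G.edgeSet, 0 < w e) {a b m : V} :
    m ∈ (hT.path a b).support ↔ hT.wdist w a b = hT.wdist w a m + hT.wdist w m b := by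
  refine ⟨hT.wdist_eq_add_of_mem_support, fun h => ?_⟩
  obtain ⟨c, hab, ham, hmb⟩ := hT.exists_median a b m
  rw [hT.wdist_eq_add_of_mem_support hab, hT.wdist_eq_add_of_mem_support ham,
    hT.wdist_eq_add_of_mem_support hmb, hT.wdist_comm w m c] at h
  have hcm : c = m := (hT.wdist_eq_zero_iff hw).mp (by linarith [hT.wdist_nonneg hw c m])
  exact hcm ▸ hab

theorem wdist_triangle (hw : ∀ e ∈ G.edgeSet, 0 < w e) (a m b : V) :
    hT.wdist w a b ≤ hT.wdist w a m + hT.wdist w m b := by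
  obtain ⟨c, hab, ham, hmb⟩ := hT.exists_median a b m
  rw [hT.wdist_eq_add_of_mem_support hab, hT.wdist_eq_add_of_mem_support ham,
    hT.wdist_eq_add_of_mem_support hmb, hT.wdist_comm w m c]
  linarith [hT.wdist_nonneg hw c m]

theorem eq_of_wdist_leaf_eq [Fintype V] {X : Type*} {f : X → V} (hw : ∀ e ∈ G.edgeSet, 0 < w e)
    (hint : ∀ v, v ∉ Set.range f → 3 ≤ G.degree v) {u v : V}
    (h : ∀ a, hT.wdist w (f a) u = hT.wdist w (f a) v) : u = v := by
  obtain ⟨a, ha⟩ := hT.exists_leaf_mem_support_path hint u v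
  have hsplit := hT.wdist_eq_add_of_mem_support (w := w) ha
  rw [← hT.wdist_eq_zero_iff hw]
  linarith [h a]

theorem wdist_eq_max_of_mem_support (hw : ∀ e ∈ G.edgeSet, 0 < w e) {x y z v : V}
    (hxy : v ∈ (hT.path x y).support) (hxz : v ∈ (hT.path x z).support)
    (hyz : v ∈ (hT.path y z).support) (a : V) :
    hT.wdist w a v = max
      (max ((hT.wdist w a x + hT.wdist w a y - hT.wdist w x y) / 2)
        ((hT.wdist w a y + hT.wdist w a z - hT.wdist w y z) / 2))
      ((hT.wdist w a x + hT.wdist w a z - hT.wdist w x z) / 2) := by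
  have bound {p q : V} (hpq : v ∈ (hT.path p q).support) :
      (hT.wdist w a p + hT.wdist w a q - hT.wdist w p q) / 2 ≤ hT.wdist w a v := by
    rw [hT.wdist_eq_add_of_mem_support hpq]
    linarith [hT.wdist_triangle hw a v p, hT.wdist_triangle hw a v q, hT.wdist_comm w p v]
  have attained {p q : V} (hpq : v ∈ (hT.path p q).support) (hp : v ∈ (hT.path a p).support)
      (hq : v ∈ (hT.path a q).support) :
      hT.wdist w a v ≤ (hT.wdist w a p + hT.wdist w a q - hT.wdist w p q) / 2 := by
    rw [hT.wdist_eq_add_of_mem_support hpq, hT.wdist_eq_add_of_mem_support hp,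
      hT.wdist_eq_add_of_mem_support hq, hT.wdist_comm w p v]
    linarith
  refine le_antisymm ?_ (max_le (max_le (bound hxy) (bound hyz)) (bound hxz))
  -- `v` lies on the paths from `a` to at least two of `x`, `y`, `z`
  rcases mem_support_path_or_mem_support_path hxy a with hx | hy
  · rcases mem_support_path_or_mem_support_path hyz a with hy | hz
    · exact (attained hxy hx hy).trans (le_max_of_le_left (le_max_left _ _))
    · exact (attained hxz hx hz).trans (le_max_right _ _)
  · rcases mem_support_path_or_mem_support_path hxz a with hx | hz
    · exact (attained hxy hx hy).trans (le_max_of_le_left (le_max_left _ _))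
    · exact (attained hyz hy hz).trans (le_max_of_le_left (le_max_right _ _))

theorem adj_iff_wdist (hw : ∀ e ∈ G.edgeSet, 0 < w e) {u v : V} :
    G.Adj u v ↔ u ≠ v ∧
      ∀ m, hT.wdist w u m + hT.wdist w m v = hT.wdist w u v → m = u ∨ m = v := by
  simp_rw [eq_comm (b := hT.wdist w u v), ← hT.mem_support_path_iff_wdist_eq_add hw]
  refine ⟨fun h => ⟨h.ne, by simp [path_of_adj h]⟩, fun ⟨huv, hmem⟩ => ?_⟩
  rcases hmem _ (next_mem_support u v) with hu | hv
  · exact absurd hu (adj_next huv).ne'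
  · exact hv ▸ adj_next huv

end Weighted

section TwoTrees

variable {V' : Type*} {G' : SimpleGraph V'} (hT' : G'.IsTree) {w : Sym2 V → ℝ}
  {w' : Sym2 V' → ℝ} {X : Type*} {f : X → V} {f' : X → V'}

theorem exists_wdist_leaf_eq [Fintype V] (hw : ∀ e ∈ G.edgeSet, 0 < w e)
    (hw' : ∀ e ∈ G'.edgeSet, 0 < w' e) (hint : ∀ v, v ∉ Set.range f → 3 ≤ G.degree v)
    (hD : ∀ x y, hT'.wdist w' (f' x) (f' y) = hT.wdist w (f x) (f y)) (v : V) :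
    ∃ v', ∀ a, hT'.wdist w' (f' a) v' = hT.wdist w (f a) v := by
  by_cases hv : v ∈ Set.range f
  · obtain ⟨x, rfl⟩ := hv
    exact ⟨f' x, fun a => hD a x⟩
  obtain ⟨x, y, z, hxy, hxz, hyz⟩ := hT.exists_leaves_mem_support_path hint hv
  obtain ⟨c, hc_xy, hc_xz, hc_zy⟩ := hT'.exists_median (f' x) (f' y) (f' z)
  refine ⟨c, fun a => ?_⟩
  rw [hT'.wdist_eq_max_of_mem_support hw' hc_xy hc_xz (mem_support_path_comm.mp hc_zy),
    hT.wdist_eq_max_of_mem_support hw hxy hxz hyz]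
  simp only [hD]

theorem wdist_le_of_wdist_leaf_eq [Fintype V'] (hw : ∀ e ∈ G.edgeSet, 0 < w e)
    (hint' : ∀ v, v ∉ Set.range f' → 3 ≤ G'.degree v) {u v : V} {u' v' : V'}
    (hu : ∀ a, hT'.wdist w' (f' a) u' = hT.wdist w (f a) u)
    (hv : ∀ a, hT'.wdist w' (f' a) v' = hT.wdist w (f a) v) :
    hT'.wdist w' u' v' ≤ hT.wdist w u v := by
  obtain ⟨a, ha⟩ := hT'.exists_leaf_mem_support_path hint' u' v'
  have hsplit := hT'.wdist_eq_add_of_mem_support (w := w') ha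
  rw [hu, hv] at hsplit
  linarith [hT.wdist_triangle hw (f a) u v]

theorem adj_iff_adj_of_wdist_eq (hw : ∀ e ∈ G.edgeSet, 0 < w e)
    (hw' : ∀ e ∈ G'.edgeSet, 0 < w' e) (e : V ≃ V')
    (he : ∀ u v, hT'.wdist w' (e u) (e v) = hT.wdist w u v) {u v : V} :
    G'.Adj (e u) (e v) ↔ G.Adj u v := by
  rw [hT.adj_iff_wdist hw, hT'.adj_iff_wdist hw', ← e.forall_congr_right]
  simp only [he, e.apply_eq_iff_eq, e.injective.ne_iff]

end TwoTrees

end IsTree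

end SimpleGraph

theorem tree_metric_determines_tree_general
    {X V V' : Type*} [Fintype V] [Fintype V']
    (G : SimpleGraph V) (G' : SimpleGraph V')
    (f : X → V) (f' : X → V')
    (hT : G.IsTree) (hT' : G'.IsTree)
    (hint : ∀ v, v ∉ Set.range f → 3 ≤ G.degree v)
    (hint' : ∀ v, v ∉ Set.range f' → 3 ≤ G'.degree v)
    -- positive edge weights
    (w : Sym2 V → ℝ) (w' : Sym2 V' → ℝ)
    (hw : ∀ e ∈ G.edgeSet, 0 < w e) (hw' : ∀ e ∈ G'.edgeSet, 0 < w' e)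
    -- the two induced tree metrics agree on `X`
    (heq : ∀ x y : X, ∀ p : G.Walk (f x) (f y), ∀ p' : G'.Walk (f' x) (f' y),
      p.IsPath → p'.IsPath → (p.edges.map w).sum = (p'.edges.map w').sum) :
    -- weight-preserving isomorphism fixing `X`
    ∃ φ : G ≃g G', (∀ x : X, φ (f x) = f' x) ∧
      ∀ a b : V, G.Adj a b → w' s(φ a, φ b) = w s(a, b) := by
  have hD : ∀ x y, hT'.wdist w' (f' x) (f' y) = hT.wdist w (f x) (f y) := fun x y =>
    (heq x y _ _ (hT.path_isPath _ _) (hT'.path_isPath _ _)).symm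
  choose φ hφ using hT.exists_wdist_leaf_eq hT' hw hw' hint hD
  choose ψ hψ using hT'.exists_wdist_leaf_eq hT hw' hw hint' fun x y => (hD x y).symm
  let e : V ≃ V' :=
    { toFun := φ
      invFun := ψ
      left_inv := fun v => hT.eq_of_wdist_leaf_eq hw hint fun a => by rw [hψ, hφ]
      right_inv := fun v' => hT'.eq_of_wdist_leaf_eq hw' hint' fun a => by rw [hφ, hψ] }
  have he : ∀ u v, hT'.wdist w' (e u) (e v) = hT.wdist w u v := fun u v =>
    le_antisymm (hT.wdist_le_of_wdist_leaf_eq hT' hw hint' (hφ u) (hφ v))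
      (hT'.wdist_le_of_wdist_leaf_eq hT hw' hint (fun a => (hφ u a).symm)
        (fun a => (hφ v a).symm))
  let iso : G ≃g G' := ⟨e, hT.adj_iff_adj_of_wdist_eq hT' hw hw' e he⟩
  refine ⟨iso, fun x => ?_, fun a b hab => ?_⟩
  · exact hT'.eq_of_wdist_leaf_eq hw' hint' fun a => (hφ (f x) a).trans (hD a x).symm
  · rw [← hT'.wdist_of_adj w' (iso.map_adj_iff.mpr hab), ← hT.wdist_of_adj w hab]
    exact he a b

/-- uniqueness in the four-point theorem: two positively edge-weighted
phylogenetic `X`-trees inducing the same tree metric on `X` are isomorphic by a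
weight-preserving graph isomorphism fixing every element of `X`. -/
theorem tree_metric_determines_tree
    {X V V' : Type*} [Fintype V] [Fintype V']
    (G : SimpleGraph V) (G' : SimpleGraph V')
    (f : X → V) (f' : X → V')
    (hf : Function.Injective f) (hf' : Function.Injective f')
    (hT : G.IsTree) (hT' : G'.IsTree)
    -- the leaves of `G` (resp. `G'`) are exactly the elements of `X`
    (hleaf : ∀ v, G.degree v = 1 ↔ v ∈ Set.range f)
    (hleaf' : ∀ v, G'.degree v = 1 ↔ v ∈ Set.range f')
    (hint : ∀ v, v ∉ Set.range f → 3 ≤ G.degree v)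
    (hint' : ∀ v, v ∉ Set.range f' → 3 ≤ G'.degree v)
    -- positive edge weights
    (w : Sym2 V → ℝ) (w' : Sym2 V' → ℝ)
    (hw : ∀ e ∈ G.edgeSet, 0 < w e) (hw' : ∀ e ∈ G'.edgeSet, 0 < w' e)
    -- the two induced tree metrics agree on `X`
    (heq : ∀ x y : X, ∀ p : G.Walk (f x) (f y), ∀ p' : G'.Walk (f' x) (f' y),
      p.IsPath → p'.IsPath → (p.edges.map w).sum = (p'.edges.map w').sum) :
    -- weight-preserving isomorphism fixing `X`
    ∃ φ : G ≃g G', (∀ x : X, φ (f x) = f' x) ∧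
      ∀ a b : V, G.Adj a b → w' s(φ a, φ b) = w s(a, b) :=
  tree_metric_determines_tree_general G G' f f' hT hT' hint hint' w w' hw hw' heq
end
end

section
/- Let T be a positively edge-weighted phylogenetic X-tree with |X| = n ≥ 4 and let D = D_T be its induced tree metric. Define Q_D(i,j) = (n−2)·D(i,j) − Σ_{k∈X, k≠i} D(i,k) − Σ_{k∈X, k≠j} D(j,k) for distinct i, j ∈ X. If the pair (x,y) of distinct leaves minimizes Q_D over all pairs of distinct leaves, then x and y form a cherry in T. -/
/-!
Writing `D` as a sum of edge weights, `Q_D(i, j) = -2 ∑ₑ w(e) cₑ(i, j)`, where `cₑ(i, j)` is `1` if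
`e` separates `i` from `j` and otherwise the number of leaves on the side of `e` away from `i` and
`j`. If `x, y` is not a cherry, let `f₁` be the second edge of the path from `x` to `y` and `f₂`
the second-to-last one. The leaves on the `x`-side of `f₁` and those on the `y`-side of `f₂` are
disjoint, so one of these sets, say the first one `A`, holds at most `n / 2` leaves. Since all
interior vertices have degree at least 3, `A` contains a cherry `a, b`, and edge by edge
`cₑ(x, y) ≤ cₑ(a, b)`, strictly for `e = f₁` because `n - |A| ≥ 2`. Hence `Q_D(a, b) < Q_D(x, y)`.
-/

open SimpleGraph Finset

attribute [local instance] Classical.propDecidable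

noncomputable section

namespace SimpleGraph

variable {V : Type*} {G : SimpleGraph V} {e f f' : Sym2 V} {a b c i j k p q r u u' v x y : V}
  {X : Finset V}

def SameSide (G : SimpleGraph V) (e : Sym2 V) (i j : V) : Prop :=
  (G.deleteEdges {e}).Reachable i j

namespace SameSide

lemma refl (G : SimpleGraph V) (e : Sym2 V) (i : V) : G.SameSide e i i := Reachable.refl i

lemma symm (h : G.SameSide e i j) : G.SameSide e j i := Reachable.symm h

lemma trans (h : G.SameSide e i j) (h' : G.SameSide e j k) : G.SameSide e i k :=
  Reachable.trans h h'

lemma exists_walk (h : G.SameSide e i j) : ∃ p : G.Walk i j, e ∉ p.edges := by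
  induction e with
  | h u v => exact reachable_deleteEdges_iff_exists_walk.mp h

end SameSide

lemma Walk.sameSide (p : G.Walk i j) (h : e ∉ p.edges) : G.SameSide e i j :=
  ⟨p.toDeleteEdge e h⟩

lemma Walk.sameSide_of_mem_support (p : G.Walk i j) (h : e ∉ p.edges) (hv : v ∈ p.support) :
    G.SameSide e i v :=
  (p.takeUntil v hv).sameSide fun h' => h (p.edges_takeUntil_subset_edges hv h')

lemma sameSide_of_adj (h : G.Adj u v) (he : s(u, v) ≠ e) : G.SameSide e u v :=
  (Walk.cons h .nil).sameSide (by simpa [eq_comm] using he)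

lemma Connected.sameSide_or_sameSide (hG : G.Connected) (h : G.Adj u v) (k : V) :
    G.SameSide s(u, v) u k ∨ G.SameSide s(u, v) v k := by
  induction (reachable_iff_reflTransGen u k).mp (hG u k) with
  | refl => exact .inl (.refl G _ u)
  | @tail j k _ hjk ih =>
    by_cases he : s(j, k) = s(u, v)
    · rcases Sym2.eq_iff.mp he with ⟨-, rfl⟩ | ⟨-, rfl⟩
      · exact .inr (.refl G _ _)
      · exact .inl (.refl G _ _)
    · exact ih.imp (·.trans (sameSide_of_adj hjk he)) (·.trans (sameSide_of_adj hjk he))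

lemma Connected.sameSide_or_sameSide_or_sameSide (hG : G.Connected) (he : e ∈ G.edgeSet)
    (i j k : V) : G.SameSide e i j ∨ G.SameSide e i k ∨ G.SameSide e j k := by
  induction e with
  | h u v =>
    rcases hG.sameSide_or_sameSide he i with hi | hi <;>
    rcases hG.sameSide_or_sameSide he j with hj | hj <;>
    rcases hG.sameSide_or_sameSide he k with hk | hk
    all_goals first
      | exact .inl (hi.symm.trans hj)
      | exact .inr (.inl (hi.symm.trans hk))
      | exact .inr (.inr (hj.symm.trans hk))

lemma IsTree.not_sameSide (hT : G.IsTree) (h : G.Adj u v) : ¬ G.SameSide s(u, v) u v :=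
  isBridge_iff.mp (isAcyclic_iff_forall_adj_isBridge.mp hT.isAcyclic h)

lemma IsTree.sameSide_iff_not_sameSide (hT : G.IsTree) (he : e ∈ G.edgeSet)
    (hij : ¬ G.SameSide e i j) (k : V) : G.SameSide e j k ↔ ¬ G.SameSide e i k := by
  refine ⟨fun hjk hik => hij (hik.trans hjk.symm), fun hik => ?_⟩
  rcases hT.connected.sameSide_or_sameSide_or_sameSide he i j k with h | h | h
  exacts [absurd h hij, absurd h hik, h]

lemma IsTree.mem_edges_iff_not_sameSide (hT : G.IsTree) {p : G.Walk i j} (hp : p.IsPath) :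
    e ∈ p.edges ↔ ¬ G.SameSide e i j := by
  refine ⟨fun he hij => ?_, fun h => by_contra fun he => h (p.sameSide he)⟩
  obtain ⟨q, hq⟩ := hij.exists_walk
  have : p = q.toPath :=
    congrArg Subtype.val ((hT.isAcyclic.subsingleton_path i j).elim ⟨p, hp⟩ q.toPath)
  exact hq (q.edges_toPath_subset_edges (this ▸ he))

lemma IsTree.sameSide_of_mem (hT : G.IsTree) (he : ¬ G.SameSide e i j)
    (hf : G.SameSide f i j) (hv : v ∈ e) : G.SameSide f i v := by
  obtain ⟨p, hp⟩ := hT.connected.exists_isPath i j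
  exact p.sameSide_of_mem_support ((hT.mem_edges_iff_not_sameSide hp).not_left.mpr hf)
    (p.mem_support_of_mem_edges ((hT.mem_edges_iff_not_sameSide hp).mpr he) hv)

lemma IsTree.sameSide_of_sameSide_of_adj (hT : G.IsTree) (hpq : G.Adj p q) (hqr : G.Adj q r)
    (hrp : r ≠ p) (h : G.SameSide s(q, r) r k) : G.SameSide s(p, q) q k := by
  obtain ⟨W, hW⟩ := h.exists_walk
  have hq : q ∉ W.support := fun hq =>
    hT.not_sameSide hqr (W.sameSide_of_mem_support hW hq).symm
  refine (Walk.cons hqr W).sameSide ?_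
  simp only [Walk.edges_cons, List.mem_cons, Sym2.eq_iff, not_or]
  exact ⟨⟨fun h => hpq.ne h.1, fun h => hrp h.1.symm⟩,
    fun he => hq (W.snd_mem_support_of_mem_edges he)⟩

lemma IsTree.eq_or_eq_of_not_sameSide (hT : G.IsTree) (hab : a ≠ b) (hac : G.Adj a c)
    (hbc : G.Adj b c) (h : ¬ G.SameSide e a b) : e = s(a, c) ∨ e = s(b, c) := by
  have hp : (Walk.cons hac (Walk.cons hbc.symm .nil)).IsPath := by
    simp [hac.ne, hbc.ne', hab]
  simpa [Sym2.eq_swap] using (hT.mem_edges_iff_not_sameSide hp).mpr h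

lemma IsTree.exists_adj_adj_not_sameSide (hT : G.IsTree) (hxy : x ≠ y) (hnadj : ¬ G.Adj x y) :
    ∃ u u', G.Adj x u ∧ G.Adj u u' ∧ u' ≠ x ∧ ¬ G.SameSide s(u, u') x y := by
  obtain ⟨p, hp⟩ := hT.connected.exists_isPath x y
  cases p with
  | nil => exact absurd rfl hxy
  | cons h₁ p =>
    cases p with
    | nil => exact absurd h₁ hnadj
    | cons h₂ p =>
      refine ⟨_, _, h₁, h₂, ?_, (hT.mem_edges_iff_not_sameSide hp).mp (by simp)⟩
      rintro rfl
      simp at hp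

lemma IsTree.disjoint_filter_sameSide (hT : G.IsTree) (X : Finset V)
    (hf : ¬ G.SameSide f x y) (hf' : ¬ G.SameSide f' x y) (hv : v ∈ f')
    (hvy : G.SameSide f v y) :
    Disjoint (X.filter (G.SameSide f x)) (X.filter (G.SameSide f' y)) := by
  refine disjoint_filter.mpr fun k _ hxk hyk => hf ?_
  have hxk' : ¬ G.SameSide f' x k := fun h => hf' (h.trans hyk.symm)
  exact (hT.sameSide_of_mem hxk' hxk hv).trans hvy

def farLeaves (G : SimpleGraph V) (X : Finset V) (e : Sym2 V) (i : V) : Finset V :=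
  X.filter fun k => ¬ G.SameSide e i k

def edgeCoeff (G : SimpleGraph V) (X : Finset V) (e : Sym2 V) (i j : V) : ℕ :=
  if G.SameSide e i j then #(G.farLeaves X e i) else 1

lemma edgeCoeff_of_sameSide (X : Finset V) (h : G.SameSide e i j) :
    G.edgeCoeff X e i j = #(G.farLeaves X e i) :=
  if_pos h

lemma edgeCoeff_of_not_sameSide (X : Finset V) (h : ¬ G.SameSide e i j) :
    G.edgeCoeff X e i j = 1 :=
  if_neg h

lemma farLeaves_congr (X : Finset V) (h : G.SameSide e i j) :
    G.farLeaves X e i = G.farLeaves X e j :=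
  filter_congr fun _ _ => not_congr ⟨h.symm.trans, h.trans⟩

lemma IsTree.card_farLeaves_add (hT : G.IsTree) (X : Finset V) (he : e ∈ G.edgeSet)
    (h : ¬ G.SameSide e i j) : #(G.farLeaves X e i) + #(G.farLeaves X e j) = #X := by
  have : G.farLeaves X e j = X.filter (G.SameSide e i) :=
    filter_congr fun k _ => by rw [hT.sameSide_iff_not_sameSide he h k, not_not]
  rw [this, add_comm]
  exact card_filter_add_card_filter_not _

lemma edgeCoeff_comm (X : Finset V) (e : Sym2 V) (i j : V) :
    G.edgeCoeff X e i j = G.edgeCoeff X e j i := by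
  by_cases h : G.SameSide e i j
  · rw [edgeCoeff_of_sameSide X h, edgeCoeff_of_sameSide X h.symm, farLeaves_congr X h]
  · rw [edgeCoeff_of_not_sameSide X h, edgeCoeff_of_not_sameSide X (mt SameSide.symm h)]

lemma IsTree.farLeaves_subset_filter_sameSide (hT : G.IsTree) (hf : f ∈ G.edgeSet)
    (hexy : G.SameSide e x y) (hexa : ¬ G.SameSide e x a)
    (hfxy : ¬ G.SameSide f x y) (hfxa : G.SameSide f x a) :
    G.farLeaves X e x ⊆ X.filter (G.SameSide f x) := by
  intro k hk
  rw [farLeaves, mem_filter] at hk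
  refine mem_filter.mpr ⟨hk.1, by_contra fun hfxk => hfxy ?_⟩
  have hfyk : G.SameSide f y k := (hT.sameSide_iff_not_sameSide hf hfxy k).mpr hfxk
  have heyk : ¬ G.SameSide e y k := fun h => hk.2 (hexy.trans h)
  exact (hT.sameSide_of_mem hexa hfxa e.out_fst_mem).trans
    (hT.sameSide_of_mem heyk hfyk e.out_fst_mem).symm

lemma IsTree.edgeCoeff_le_edgeCoeff (hT : G.IsTree) (he : e ∈ G.edgeSet) (hf : f ∈ G.edgeSet)
    (hx : x ∈ X) (hy : y ∈ X) (hfxy : ¬ G.SameSide f x y) (hfxa : G.SameSide f x a)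
    (hsmall : 2 * #(X.filter (G.SameSide f x)) ≤ #X) (heab : G.SameSide e a b) :
    G.edgeCoeff X e x y ≤ G.edgeCoeff X e a b := by
  rw [edgeCoeff_of_sameSide X heab]
  by_cases hexy : G.SameSide e x y
  · rw [edgeCoeff_of_sameSide X hexy]
    by_cases hexa : G.SameSide e x a
    · rw [farLeaves_congr X hexa]
    · have hsub :=
        card_le_card (hT.farLeaves_subset_filter_sameSide (X := X) hf hexy hexa hfxy hfxa)
      have hadd := hT.card_farLeaves_add X he hexa
      omega
  · rw [edgeCoeff_of_not_sameSide X hexy]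
    refine card_pos.mpr ?_
    by_cases heax : G.SameSide e a x
    · exact ⟨y, mem_filter.mpr ⟨hy, fun h => hexy (heax.symm.trans h)⟩⟩
    · exact ⟨x, mem_filter.mpr ⟨hx, heax⟩⟩

variable [Fintype V]

lemma eq_of_adj_of_degree_eq_one (ha : G.degree a = 1) (hb : G.Adj a b) (hc : G.Adj a c) :
    b = c :=
  (degree_eq_one_iff_existsUnique_adj.mp ha).unique hb hc

lemma eq_of_sameSide_of_degree_eq_one (ha : G.degree a = 1) (hac : G.Adj a c)
    (h : G.SameSide s(a, c) a k) : k = a := by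
  obtain ⟨p, hp⟩ := h.exists_walk
  cases p with
  | nil => rfl
  | cons h' p =>
    obtain rfl := eq_of_adj_of_degree_eq_one ha h' hac
    simp at hp

lemma card_le_two_of_adj_of_degree_eq_one (hG : G.Connected) (hx : G.degree x = 1)
    (hy : G.degree y = 1) (hxy : G.Adj x y) : Fintype.card V ≤ 2 := by
  refine (card_le_card (s := univ) (t := {x, y}) fun k _ => ?_).trans card_le_two
  rcases hG.sameSide_or_sameSide hxy k with h | h
  · simp [eq_of_sameSide_of_degree_eq_one hx hxy h]
  · rw [Sym2.eq_swap] at h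
    simp [eq_of_sameSide_of_degree_eq_one hy hxy.symm h]

lemma exists_adj_adj_ne_ne (h : 3 ≤ G.degree v) (p : V) :
    ∃ r₁ r₂, G.Adj v r₁ ∧ G.Adj v r₂ ∧ r₁ ≠ r₂ ∧ r₁ ≠ p ∧ r₂ ≠ p := by
  have hcard : 1 < ((G.neighborFinset v).erase p).card := by
    have := Finset.pred_card_le_card_erase (s := G.neighborFinset v) (a := p)
    rw [card_neighborFinset_eq_degree] at this
    omega
  obtain ⟨r₁, h₁, r₂, h₂, hne⟩ := Finset.one_lt_card.mp hcard
  simp only [mem_erase, mem_neighborFinset] at h₁ h₂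
  exact ⟨r₁, r₂, h₁.2, h₂.2, hne, h₁.1, h₂.1⟩

lemma IsTree.exists_cherry (hT : G.IsTree) (hdeg : ∀ v, G.degree v = 1 ∨ 3 ≤ G.degree v)
    (hpq : G.Adj p q) (hq : 3 ≤ G.degree q) :
    ∃ a b c, a ≠ b ∧ G.degree a = 1 ∧ G.degree b = 1 ∧ G.Adj a c ∧ G.Adj b c ∧
      G.SameSide s(p, q) q a ∧ G.SameSide s(p, q) q b := by
  induction hn : #(univ.filter (G.SameSide s(p, q) q)) using Nat.strong_induction_on
    generalizing p q with
  | _ n ih =>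
  by_cases hr : ∃ r, G.Adj q r ∧ r ≠ p ∧ 3 ≤ G.degree r
  · obtain ⟨r, hqr, hrp, hr⟩ := hr
    have hmono : ∀ k, G.SameSide s(q, r) r k → G.SameSide s(p, q) q k :=
      fun k => hT.sameSide_of_sameSide_of_adj hpq hqr hrp
    have hlt : #(univ.filter (G.SameSide s(q, r) r)) < n := by
      refine hn ▸ card_lt_card ⟨fun k => by simpa using hmono k, fun hsub => ?_⟩
      have : G.SameSide s(q, r) r q := by simpa using hsub (by simpa using .refl G _ q)
      exact hT.not_sameSide hqr this.symm
    obtain ⟨a, b, c, hab, ha, hb, hac, hbc, hra, hrb⟩ := ih _ hlt hqr hr rfl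
    exact ⟨a, b, c, hab, ha, hb, hac, hbc, hmono a hra, hmono b hrb⟩
  · push Not at hr
    obtain ⟨r₁, r₂, h₁, h₂, hne, hr₁, hr₂⟩ := exists_adj_adj_ne_ne hq p
    have hleaf : ∀ r, G.Adj q r → r ≠ p → G.degree r = 1 := fun r hqr hrp =>
      (hdeg r).resolve_right (hr r hqr hrp).not_ge
    have hside : ∀ r, G.Adj q r → r ≠ p → G.SameSide s(p, q) q r := fun r hqr hrp =>
      sameSide_of_adj hqr (by simp [hpq.ne', hrp])
    exact ⟨r₁, r₂, q, hne, hleaf r₁ h₁ hr₁, hleaf r₂ h₂ hr₂, h₁.symm, h₂.symm,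
      hside r₁ h₁ hr₁, hside r₂ h₂ hr₂⟩

lemma edgeCoeff_le_one_of_degree_eq_one (hG : G.Connected) (X : Finset V) (ha : G.degree a = 1)
    (hac : G.Adj a c) (hxy : x ≠ y) : G.edgeCoeff X s(a, c) x y ≤ 1 := by
  by_cases h : G.SameSide s(a, c) x y
  · rw [edgeCoeff_of_sameSide X h]
    have hax : ¬ G.SameSide s(a, c) a x := fun hax => hxy <|
      (eq_of_sameSide_of_degree_eq_one ha hac hax).trans
        (eq_of_sameSide_of_degree_eq_one ha hac (hax.trans h)).symm
    refine (card_le_card (t := {a}) fun k hk => ?_).trans (card_singleton a).le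
    rw [farLeaves, mem_filter] at hk
    rcases hG.sameSide_or_sameSide_or_sameSide (G.mem_edgeSet.mpr hac) a x k with h' | h' | h'
    exacts [absurd h' hax, mem_singleton.mpr (eq_of_sameSide_of_degree_eq_one ha hac h'),
      absurd h' hk.2]
  · exact (edgeCoeff_of_not_sameSide X h).le

def njScore (G : SimpleGraph V) (X : Finset V) (w : Sym2 V → ℝ) (i j : V) : ℝ :=
  ∑ e ∈ G.edgeFinset, w e * G.edgeCoeff X e i j

lemma njScore_comm (X : Finset V) (w : Sym2 V → ℝ) (i j : V) :
    G.njScore X w i j = G.njScore X w j i := by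
  simp only [njScore, edgeCoeff_comm X _ i j]

section TreeMetric

variable {w : Sym2 V → ℝ} {D Q : V → V → ℝ}

lemma IsTree.eq_sum_separating_edges (hT : G.IsTree)
    (hD : ∀ a b : V, ∀ p : G.Walk a b, p.IsPath → D a b = (p.edges.map w).sum) (i j : V) :
    D i j = ∑ e ∈ G.edgeFinset with ¬ G.SameSide e i j, w e := by
  obtain ⟨p, hp⟩ := hT.connected.exists_isPath i j
  rw [hD i j p hp, ← List.sum_toFinset w hp.isTrail.edges_nodup]
  congr 1
  ext e
  rw [List.mem_toFinset, mem_filter, mem_edgeFinset, hT.mem_edges_iff_not_sameSide hp]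
  exact ⟨fun h => ⟨p.edges_subset_edgeSet ((hT.mem_edges_iff_not_sameSide hp).mpr h), h⟩,
    And.right⟩

lemma IsTree.sum_erase_eq_sum_card_farLeaves (hT : G.IsTree)
    (hD : ∀ a b : V, ∀ p : G.Walk a b, p.IsPath → D a b = (p.edges.map w).sum) (i : V) :
    ∑ k ∈ X.erase i, D i k = ∑ e ∈ G.edgeFinset, w e * #(G.farLeaves X e i) := by
  rw [sum_erase _ (by simp [hT.eq_sum_separating_edges hD i i, SameSide.refl])]
  simp_rw [hT.eq_sum_separating_edges hD i, sum_filter]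
  rw [sum_comm]
  refine sum_congr rfl fun e _ => ?_
  rw [← sum_filter, sum_const, nsmul_eq_mul, mul_comm, farLeaves]

lemma IsTree.eq_neg_two_mul_njScore (hT : G.IsTree)
    (hD : ∀ a b : V, ∀ p : G.Walk a b, p.IsPath → D a b = (p.edges.map w).sum)
    (hQ : ∀ i j : V, Q i j = (X.card - 2 : ℝ) * D i j
        - ∑ k ∈ X.erase i, D i k - ∑ k ∈ X.erase j, D j k) (i j : V) :
    Q i j = -2 * G.njScore X w i j := by
  rw [hQ, hT.sum_erase_eq_sum_card_farLeaves hD, hT.sum_erase_eq_sum_card_farLeaves hD,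
    hT.eq_sum_separating_edges hD, sum_filter, njScore, mul_sum, mul_sum, ← sum_sub_distrib,
    ← sum_sub_distrib]
  refine sum_congr rfl fun e he => ?_
  by_cases h : G.SameSide e i j
  · rw [edgeCoeff_of_sameSide X h, if_neg (not_not_intro h), farLeaves_congr X h]
    ring
  · have hcard : (#(G.farLeaves X e i) : ℝ) + #(G.farLeaves X e j) = #X := by
      exact_mod_cast hT.card_farLeaves_add X (mem_edgeFinset.mp he) h
    rw [edgeCoeff_of_not_sameSide X h, if_pos h, ← hcard]
    push_cast
    ring

end TreeMetric

section Comparison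

variable {w : Sym2 V → ℝ}

lemma IsTree.njScore_lt_of_cherry (hT : G.IsTree) (hw : ∀ e ∈ G.edgeSet, 0 < w e)
    (hn : 4 ≤ #X) (hx : x ∈ X) (hy : y ∈ X) (hxy : x ≠ y) (hab : a ≠ b)
    (ha : G.degree a = 1) (hb : G.degree b = 1) (hac : G.Adj a c) (hbc : G.Adj b c)
    (hf : f ∈ G.edgeSet) (hfxy : ¬ G.SameSide f x y) (hfxa : G.SameSide f x a)
    (hfxb : G.SameSide f x b) (hsmall : 2 * #(X.filter (G.SameSide f x)) ≤ #X) :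
    G.njScore X w x y < G.njScore X w a b := by
  have hle : ∀ e ∈ G.edgeFinset, G.edgeCoeff X e x y ≤ G.edgeCoeff X e a b := by
    intro e he
    rw [mem_edgeFinset] at he
    by_cases heab : G.SameSide e a b
    · exact hT.edgeCoeff_le_edgeCoeff he hf hx hy hfxy hfxa hsmall heab
    · rw [edgeCoeff_of_not_sameSide X heab]
      rcases hT.eq_or_eq_of_not_sameSide hab hac hbc heab with rfl | rfl
      exacts [edgeCoeff_le_one_of_degree_eq_one hT.connected X ha hac hxy,
        edgeCoeff_le_one_of_degree_eq_one hT.connected X hb hbc hxy]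
  -- `f` separates `x` from `y` but not `a` from `b`, and its far side from `a` holds at least
  -- half of the `n ≥ 4` leaves.
  have hlt : G.edgeCoeff X f x y < G.edgeCoeff X f a b := by
    rw [edgeCoeff_of_not_sameSide X hfxy, edgeCoeff_of_sameSide X (hfxa.symm.trans hfxb),
      ← farLeaves_congr X hfxa, farLeaves]
    have := card_filter_add_card_filter_not (s := X) (G.SameSide f x)
    omega
  refine sum_lt_sum (fun e he => ?_) ⟨f, mem_edgeFinset.mpr hf, ?_⟩
  · exact mul_le_mul_of_nonneg_left (by exact_mod_cast hle e he)
      (hw e (mem_edgeFinset.mp he)).le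
  · exact mul_lt_mul_of_pos_left (by exact_mod_cast hlt) (hw f hf)

lemma IsTree.exists_njScore_lt (hT : G.IsTree) (hleaf : ∀ v : V, G.degree v = 1 ↔ v ∈ X)
    (hint : ∀ v : V, v ∉ X → 3 ≤ G.degree v) (hw : ∀ e ∈ G.edgeSet, 0 < w e) (hn : 4 ≤ #X)
    (hx : x ∈ X) (hy : y ∈ X) (hxy : x ≠ y) (hxu : G.Adj x u) (huu' : G.Adj u u')
    (hu'x : u' ≠ x) (hsep : ¬ G.SameSide s(u, u') x y)
    (hsmall : 2 * #(X.filter (G.SameSide s(u, u') x)) ≤ #X) :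
    ∃ a ∈ X, ∃ b ∈ X, a ≠ b ∧ G.njScore X w x y < G.njScore X w a b := by
  have hdeg : ∀ v, G.degree v = 1 ∨ 3 ≤ G.degree v := fun v =>
    (em (v ∈ X)).imp (hleaf v).2 (hint v)
  have hu : 3 ≤ G.degree u := (hdeg u).resolve_left fun h =>
    hu'x (eq_of_adj_of_degree_eq_one h huu' hxu.symm)
  obtain ⟨a, b, c, hab, ha, hb, hac, hbc, hua, hub⟩ := hT.exists_cherry hdeg huu'.symm hu
  rw [Sym2.eq_swap] at hua hub
  have hxu' : G.SameSide s(u, u') x u := sameSide_of_adj hxu (by simp [hxu.ne, hu'x.symm])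
  exact ⟨a, (hleaf a).1 ha, b, (hleaf b).1 hb, hab, hT.njScore_lt_of_cherry hw hn hx hy hxy hab
    ha hb hac hbc huu' hsep (hxu'.trans hua) (hxu'.trans hub) hsmall⟩

end Comparison

end SimpleGraph

/-- Saitou–Nei / Studier–Keppler cherry picking: if `D` is the tree metric
of a positively edge-weighted phylogenetic `X`-tree with `n = |X| ≥ 4` leaves and the pair
`(x, y)` of distinct leaves minimizes
`Q_D(i,j) = (n-2)·D(i,j) - ∑_{k ≠ i} D(i,k) - ∑_{k ≠ j} D(j,k)`,
then `x, y` is a cherry of the tree. -/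
theorem neighbor_joining_cherry_picking
    {V : Type*} [Fintype V] (G : SimpleGraph V) (X : Finset V)
    (hT : G.IsTree)
    (hleaf : ∀ v : V, G.degree v = 1 ↔ v ∈ X)
    (hint : ∀ v : V, v ∉ X → 3 ≤ G.degree v)
    (w : Sym2 V → ℝ) (hw : ∀ e ∈ G.edgeSet, 0 < w e)
    (hn : 4 ≤ X.card)
    -- `D` is the induced tree metric
    (D : V → V → ℝ)
    (hD : ∀ a b : V, ∀ p : G.Walk a b, p.IsPath → D a b = (p.edges.map w).sum)
    -- the neighbor-joining criterion
    (Q : V → V → ℝ)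
    (hQ : ∀ i j : V, Q i j = (X.card - 2 : ℝ) * D i j
        - ∑ k ∈ X.erase i, D i k - ∑ k ∈ X.erase j, D j k)
    (x y : V) (hx : x ∈ X) (hy : y ∈ X) (hxy : x ≠ y)
    -- `(x, y)` minimizes `Q` over all pairs of distinct leaves
    (hmin : ∀ i ∈ X, ∀ j ∈ X, i ≠ j → Q x y ≤ Q i j) :
    -- `x, y` form a cherry: they are adjacent to a common vertex
    ∃ v : V, G.Adj x v ∧ G.Adj y v := by
  by_contra hcherry
  have hnadj : ¬ G.Adj x y := fun h => by
    have := card_le_two_of_adj_of_degree_eq_one hT.connected ((hleaf x).2 hx) ((hleaf y).2 hy) h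
    have := card_le_univ X
    omega
  obtain ⟨u, u', hxu, huu', hu'x, hsepx⟩ := hT.exists_adj_adj_not_sameSide hxy hnadj
  obtain ⟨v, v', hyv, hvv', hv'y, hsepy⟩ :=
    hT.exists_adj_adj_not_sameSide hxy.symm (hnadj ∘ Adj.symm)
  have hvy : G.SameSide s(u, u') v y := sameSide_of_adj hyv.symm <| by
    rw [Ne, Sym2.eq_iff]
    rintro (⟨-, rfl⟩ | ⟨-, rfl⟩)
    exacts [hcherry ⟨u, hxu, huu'.symm⟩, hnadj hxu]
  have hdisj := hT.disjoint_filter_sameSide X hsepx (mt SameSide.symm hsepy)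
    (Sym2.mem_mk_left v v') hvy
  have hcard := (card_union_of_disjoint hdisj).symm.trans_le
    (card_le_card (union_subset (filter_subset _ X) (filter_subset _ X)))
  obtain ⟨a, ha, b, hb, hab, hlt⟩ :
      ∃ a ∈ X, ∃ b ∈ X, a ≠ b ∧ G.njScore X w x y < G.njScore X w a b := by
    by_cases hsmall : 2 * #(X.filter (G.SameSide s(u, u') x)) ≤ #X
    · exact hT.exists_njScore_lt hleaf hint hw hn hx hy hxy hxu huu' hu'x hsepx hsmall
    · rw [njScore_comm]
      exact hT.exists_njScore_lt hleaf hint hw hn hy hx hxy.symm hyv hvv' hv'y hsepy (by omega)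
  have hQ_lt := hmin a ha b hb hab
  rw [hT.eq_neg_two_mul_njScore hD hQ, hT.eq_neg_two_mul_njScore hD hQ] at hQ_lt
  linarith
end
end

section
/- Let m ≥ 3 and let X be a finite set with |X| = 2m−2. Then there exist two positively edge-weighted phylogenetic X-trees T and T' whose m-subtree weight maps agree on every m-element subset of X, but such that there is no graph isomorphism from T to T' fixing every element of X and preserving edge weights. -/
open SimpleGraph Finset

attribute [local instance] Classical.propDecidable

noncomputable section

/-- `e` lies on some path (hence on the unique path, in a tree) from `a` to `b`. -/
def OnPath {V : Type*} (G : SimpleGraph V) (a b : V) (e : Sym2 V) : Prop :=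
  ∃ p : G.Walk a b, p.IsPath ∧ e ∈ p.edges

/-- The edge set `[R]` of the smallest subtree of a tree `G` spanning `R`. -/
def subtreeEdges {V : Type*} [Fintype V] (G : SimpleGraph V) (R : Finset V) :
    Finset (Sym2 V) :=
  G.edgeFinset.filter fun e => ∃ a ∈ R, ∃ b ∈ R, OnPath G a b e

/-- The subtree weight `D(R) = ∑_{e ∈ [R]} w(e)`. -/
def subtreeWeight {V : Type*} [Fintype V] (G : SimpleGraph V) (w : Sym2 V → ℝ)
    (R : Finset V) : ℝ :=
  ∑ e ∈ subtreeEdges G R, w e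

/-!
Let the `2m - 2` leaves hang off two adjacent hubs, `m - 1` on each, with all edge weights `1`.
An `m`-set of leaves cannot lie on one side, so the subtree it spans consists of its `m` pendant
edges and the edge between the hubs: its weight is `m + 1`, whatever the split of the leaves.
Two different splits thus have the same `m`-subtree weight map, while an isomorphism fixing the
leaves must preserve which leaves share a hub.
-/

namespace SimpleGraph

section Transfer

variable {V W : Type*} {G : SimpleGraph V} {H : SimpleGraph W}

lemma Walk.IsPath.eq_or_eq_of_mem_support_of_forall_adj_eq {u v : V}
    (hu : ∀ w, G.Adj v w → w = u) :
    ∀ {a b : V} {p : G.Walk a b}, p.IsPath → v ∈ p.support → v = a ∨ v = b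
  | _, _, .nil, _, hv => .inl (by simpa using hv)
  | a, b, .cons h q, hp, hv => by
    rw [Walk.cons_isPath_iff] at hp
    rcases List.mem_cons.1 (Walk.support_cons h q ▸ hv) with rfl | hv
    · exact .inl rfl
    obtain rfl | rfl := hp.1.eq_or_eq_of_mem_support_of_forall_adj_eq hu hv
    · by_cases hq : q.Nil
      · exact .inr hq.eq
      · have hau : a = u := hu a h.symm
        have hsnd : q.snd = u := hu _ (Walk.adj_snd hq)
        exact absurd (hau ▸ hsnd ▸ q.getVert_mem_support 1) hp.2
    · exact .inr rfl

lemma OnPath.map (φ : G ↪g H) {a b : V} {e : Sym2 V} (h : OnPath G a b e) :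
    OnPath H (φ a) (φ b) (e.map φ) := by
  obtain ⟨p, hp, he⟩ := h
  exact ⟨p.map φ.toHom, hp.map φ.injective, by simpa [Walk.edges_map] using List.mem_map_of_mem he⟩

lemma exists_iso_fin [Fintype V] (G : SimpleGraph V) :
    ∃ (N : ℕ) (G' : SimpleGraph (Fin N)), Nonempty (G ≃g G') :=
  ⟨_, _, ⟨Iso.map (Fintype.equivFin V) G⟩⟩

variable [Fintype V] [Fintype W]

lemma map_mem_subtreeEdges [DecidableEq W] (φ : G ↪g H) {R : Finset V} {e : Sym2 V}
    (he : e ∈ subtreeEdges G R) : e.map φ ∈ subtreeEdges H (R.image φ) := by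
  simp only [subtreeEdges, mem_filter, mem_edgeFinset, mem_image] at he ⊢
  obtain ⟨he, a, ha, b, hb, hab⟩ := he
  exact ⟨φ.map_mem_edgeSet_iff.2 he, φ a, ⟨a, ha, rfl⟩, φ b, ⟨b, hb, rfl⟩, hab.map φ⟩

lemma subtreeWeight_iso [DecidableEq W] (φ : G ≃g H) (w : Sym2 W → ℝ) (R : Finset V) :
    subtreeWeight H w (R.image φ) = subtreeWeight G (w ∘ Sym2.map φ) R := by
  refine sum_nbij' (Sym2.map φ.symm) (Sym2.map φ) (fun e he => ?_)
    (fun e he => map_mem_subtreeEdges φ.toEmbedding he) (fun e _ => ?_) (fun e _ => ?_)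
    (fun e _ => ?_)
  · simpa [image_image] using map_mem_subtreeEdges φ.symm.toEmbedding he
  all_goals simp [Sym2.map_map]

structure IsPhylogeneticTree {X : Type*} (G : SimpleGraph V) (f : X → V) : Prop where
  isTree : G.IsTree
  injective : Function.Injective f
  degree_eq_one_iff : ∀ v, G.degree v = 1 ↔ v ∈ Set.range f
  three_le_degree : ∀ v, v ∉ Set.range f → 3 ≤ G.degree v

lemma IsPhylogeneticTree.iso {X : Type*} {f : X → V} (hG : IsPhylogeneticTree G f)
    (φ : G ≃g H) : IsPhylogeneticTree H (φ ∘ f) where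
  isTree := φ.isTree_iff.1 hG.isTree
  injective := φ.injective.comp hG.injective
  degree_eq_one_iff := φ.surjective.forall.2 fun v => by
    rw [φ.degree_eq, Set.range_comp, φ.injective.mem_set_image, hG.degree_eq_one_iff]
  three_le_degree := φ.surjective.forall.2 fun v => by
    rw [φ.degree_eq, Set.range_comp, φ.injective.mem_set_image]
    exact hG.three_le_degree v

end Transfer

section DoubleStar

variable {α : Type*} (σ : α → Bool)

/-- Leaves `inl x` and hubs `inr b`: the leaf `x` hangs off the hub `inr (σ x)`. -/
def doubleStar : SimpleGraph (α ⊕ Bool) where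
  Adj
    | .inl x, .inr b => σ x = b
    | .inr b, .inl x => σ x = b
    | .inr b, .inr c => b ≠ c
    | .inl _, .inl _ => False
  symm := ⟨by rintro (x | b) (y | c) h <;> simp_all [eq_comm]⟩
  loopless := ⟨by rintro (x | b) h <;> simp_all⟩

def leafEdge (x : α) : Sym2 (α ⊕ Bool) := s(.inl x, .inr (σ x))

def hubEdge : Sym2 (α ⊕ Bool) := s(.inr true, .inr false)

variable {σ}

@[simp] lemma doubleStar_adj_inl_inl {x y : α} : ¬ (doubleStar σ).Adj (.inl x) (.inl y) := id

@[simp] lemma doubleStar_adj_inl_inr {x : α} {b : Bool} :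
    (doubleStar σ).Adj (.inl x) (.inr b) ↔ σ x = b := .rfl

@[simp] lemma doubleStar_adj_inr_inl {x : α} {b : Bool} :
    (doubleStar σ).Adj (.inr b) (.inl x) ↔ σ x = b := .rfl

@[simp] lemma doubleStar_adj_inr_inr {b c : Bool} :
    (doubleStar σ).Adj (.inr b) (.inr c) ↔ b ≠ c := .rfl

lemma doubleStar_adj_inl {x : α} {v : α ⊕ Bool} :
    (doubleStar σ).Adj (.inl x) v ↔ v = .inr (σ x) := by
  cases v <;> simp [eq_comm]

lemma connected_doubleStar : (doubleStar σ).Connected := by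
  have hub : ∀ b, (doubleStar σ).Reachable (.inr true) (.inr b) := by
    rintro (_ | _)
    · exact Adj.reachable (by simp)
    · rfl
  refine (connected_iff_exists_forall_reachable _).2 ⟨.inr true, ?_⟩
  rintro (x | b)
  · exact (hub (σ x)).trans (Adj.reachable (by simp))
  · exact hub b

lemma hubEdge_eq {b c : Bool} (h : b ≠ c) :
    s(.inr b, .inr c) = (hubEdge : Sym2 (α ⊕ Bool)) := by
  cases b <;> cases c <;> simp_all [hubEdge, Sym2.eq_swap]

lemma leafEdge_injective : Function.Injective (leafEdge σ) := fun x y h => by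
  simp only [leafEdge, Sym2.eq_iff, Sum.inl.injEq, reduceCtorEq, false_and, or_false] at h
  exact h.1

lemma leafEdge_ne_hubEdge (x : α) : leafEdge σ x ≠ hubEdge := by
  simp [leafEdge, hubEdge]

lemma mem_edgeSet_doubleStar {e : Sym2 (α ⊕ Bool)} :
    e ∈ (doubleStar σ).edgeSet ↔ e = hubEdge ∨ ∃ x, e = leafEdge σ x := by
  induction e using Sym2.ind with
  | _ v w =>
  rcases v with x | b <;> rcases w with y | c
  all_goals simp [leafEdge, hubEdge, eq_comm]
  cases b <;> cases c <;> simp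

lemma onPath_doubleStar {x y : α} (hxy : σ x ≠ σ y) {e : Sym2 (α ⊕ Bool)}
    (he : e = leafEdge σ x ∨ e = hubEdge ∨ e = leafEdge σ y) :
    OnPath (doubleStar σ) (.inl x) (.inl y) e := by
  have hx : (doubleStar σ).Adj (.inl x) (.inr (σ x)) := by simp
  have hxy' : (doubleStar σ).Adj (.inr (σ x)) (.inr (σ y)) := by simpa using hxy
  have hy : (doubleStar σ).Adj (.inr (σ y)) (.inl y) := by simp
  refine ⟨.cons hx (.cons hxy' (.cons hy .nil)), ?_, ?_⟩
  · have : x ≠ y := fun h => hxy (h ▸ rfl)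
    simp [Walk.isPath_def, hxy, this]
  · rw [← hubEdge_eq hxy] at he
    rcases he with rfl | rfl | rfl <;> simp [leafEdge, Sym2.eq_swap]

lemma doubleStar_sides_eq_of_iso {τ : α → Bool} (φ : doubleStar σ ≃g doubleStar τ)
    (hφ : ∀ x, φ (.inl x) = .inl x) {x y : α} (hxy : σ x = σ y) : τ x = τ y := by
  have hub : ∀ z, φ (.inr (σ z)) = .inr (τ z) := fun z =>
    doubleStar_adj_inl.1 (hφ z ▸ φ.map_adj_iff.2 (doubleStar_adj_inl.2 rfl))
  exact Sum.inr_injective ((hub x).symm.trans (hxy ▸ hub y))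

variable [Fintype α]

lemma degree_doubleStar_inl (x : α) : (doubleStar σ).degree (.inl x) = 1 := by
  rw [degree_eq_one_iff_existsUnique_adj]
  exact ⟨.inr (σ x), by simp, fun v => doubleStar_adj_inl.1⟩

lemma degree_doubleStar_inr (b : Bool) :
    (doubleStar σ).degree (.inr b) = #{x | σ x = b} + 1 := by
  have : (doubleStar σ).neighborFinset (.inr b) =
      insert (.inr !b) (({x | σ x = b} : Finset α).map .inl) := by
    ext (x | c) <;> simp [Bool.eq_not, eq_comm]
  rw [← card_neighborFinset_eq_degree, this, card_insert_of_notMem (by simp), card_map]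

lemma card_edgeFinset_doubleStar : #(doubleStar σ).edgeFinset = Fintype.card α + 1 := by
  have := (doubleStar σ).sum_degrees_eq_twice_card_edges
  simp only [Fintype.sum_sum_type, degree_doubleStar_inl, degree_doubleStar_inr,
    Fintype.sum_bool, sum_const, card_univ, smul_eq_mul, mul_one] at this
  have hsides := card_filter_add_card_filter_not (s := (univ : Finset α)) (σ · = true)
  simp only [Bool.not_eq_true, card_univ] at hsides
  omega

lemma isTree_doubleStar : (doubleStar σ).IsTree := by
  rw [isTree_iff_connected_and_card, Nat.card_eq_fintype_card, ← edgeFinset_card,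
    card_edgeFinset_doubleStar, Nat.card_eq_fintype_card, Fintype.card_sum, Fintype.card_bool]
  exact ⟨connected_doubleStar, rfl⟩

lemma isPhylogeneticTree_doubleStar (hσ : ∀ b, 2 ≤ #{x | σ x = b}) :
    IsPhylogeneticTree (doubleStar σ) Sum.inl where
  isTree := isTree_doubleStar
  injective := Sum.inl_injective
  degree_eq_one_iff := by
    rintro (x | b)
    · simp [degree_doubleStar_inl]
    · simp only [degree_doubleStar_inr, Set.mem_range, reduceCtorEq, exists_false, iff_false]
      have := hσ b
      omega
  three_le_degree := by
    rintro (x | b) hv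
    · exact absurd ⟨x, rfl⟩ hv
    · simpa [degree_doubleStar_inr] using hσ b

lemma subtreeEdges_doubleStar {R : Finset α} (hR : ∀ b, ∃ x ∈ R, σ x = b) :
    subtreeEdges (doubleStar σ) (R.image .inl) = insert hubEdge (R.image (leafEdge σ)) := by
  ext e
  simp only [subtreeEdges, mem_filter, mem_edgeFinset, mem_insert, mem_image,
    exists_exists_and_eq_and]
  constructor
  · rintro ⟨he, a, ha, b, hb, p, hp, hep⟩
    rcases mem_edgeSet_doubleStar.1 he with rfl | ⟨x, rfl⟩
    · exact .inl rfl
    · refine .inr ⟨x, ?_, rfl⟩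
      -- a pendant edge lies on a path only if its leaf is an endpoint
      have hx := p.fst_mem_support_of_mem_edges hep
      rcases hp.eq_or_eq_of_mem_support_of_forall_adj_eq (fun w => doubleStar_adj_inl.1) hx
        with h | h <;> cases h
      exacts [ha, hb]
  · rintro (rfl | ⟨x, hx, rfl⟩)
    · obtain ⟨x, hx, hσx⟩ := hR true
      obtain ⟨y, hy, hσy⟩ := hR false
      refine ⟨mem_edgeSet_doubleStar.2 (.inl rfl), x, hx, y, hy, onPath_doubleStar ?_ (by simp)⟩
      simp [hσx, hσy]
    · obtain ⟨y, hy, hσy⟩ := hR (!σ x)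
      exact ⟨mem_edgeSet_doubleStar.2 (.inr ⟨x, rfl⟩), x, hx, y, hy,
        onPath_doubleStar (by simp [hσy]) (.inl rfl)⟩

lemma subtreeWeight_doubleStar (w : Sym2 (α ⊕ Bool) → ℝ) {R : Finset α}
    (hR : ∀ b, ∃ x ∈ R, σ x = b) :
    subtreeWeight (doubleStar σ) w (R.image .inl) = w hubEdge + ∑ x ∈ R, w (leafEdge σ x) := by
  rw [subtreeWeight, subtreeEdges_doubleStar hR, sum_insert, sum_image leafEdge_injective.injOn]
  simpa using fun x _ => leafEdge_ne_hubEdge x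

lemma subtreeWeight_one_of_iso_doubleStar {W : Type*} [Fintype W] [DecidableEq W]
    {H : SimpleGraph W} (φ : doubleStar σ ≃g H) {R : Finset α} (hR : ∀ b, ∃ x ∈ R, σ x = b) :
    subtreeWeight H (fun _ => 1) (R.image (φ ∘ Sum.inl)) = #R + 1 := by
  rw [← image_image, subtreeWeight_iso, subtreeWeight_doubleStar _ hR]
  simp [add_comm]

end DoubleStar

end SimpleGraph

lemma exists_mem_eq_of_card_filter_lt {α : Type*} [Fintype α] {σ : α → Bool} {R : Finset α}
    (hR : ∀ b, #{x | σ x = b} < #R) (b : Bool) : ∃ x ∈ R, σ x = b := by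
  obtain ⟨x, hxR, hx⟩ := exists_mem_notMem_of_card_lt_card (hR !b)
  exact ⟨x, hxR, by simpa using hx⟩

def lowerHalf {X : Type*} (k : ℕ) (e : X ≃ Fin (2 * k)) (x : X) : Bool := decide ((e x : ℕ) < k)

lemma card_filter_lowerHalf {X : Type*} [Fintype X] (k : ℕ) (e : X ≃ Fin (2 * k)) (b : Bool) :
    #{x | lowerHalf k e x = b} = k := by
  have hmap : ({x | lowerHalf k e x = b} : Finset X).map e.toEmbedding =
      ({i | decide ((i : ℕ) < k) = b} : Finset (Fin (2 * k))) := by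
    ext i
    rw [mem_map_equiv, mem_filter, mem_filter]
    simp [lowerHalf]
  rw [← card_map, hmap]
  have hlow : #{i : Fin (2 * k) | (i : ℕ) < k} = k := by simp [Fin.card_filter_val_lt, two_mul]
  cases b
  · have hsum := card_filter_add_card_filter_not (s := univ) fun i : Fin (2 * k) => (i : ℕ) < k
    simp only [decide_eq_false_iff_not, card_univ, Fintype.card_fin] at hsum ⊢
    omega
  · simpa using hlow

lemma exists_halvings_separating {X : Type*} [Fintype X] {k : ℕ} (hX : Fintype.card X = 2 * k)
    (hk : 2 ≤ k) : ∃ σ σ' : X → Bool, (∀ b, #{x | σ x = b} = k) ∧ (∀ b, #{x | σ' x = b} = k) ∧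
      ∃ x y, σ x = σ y ∧ σ' x ≠ σ' y := by
  let e : X ≃ Fin (2 * k) := Fintype.equivFinOfCardEq hX
  let a : Fin (2 * k) := ⟨k - 2, by omega⟩
  let b : Fin (2 * k) := ⟨k - 1, by omega⟩
  let c : Fin (2 * k) := ⟨k, by omega⟩
  have hab : a ≠ b := by simp [a, b, Fin.ext_iff]; omega
  have hac : a ≠ c := by simp [a, c, Fin.ext_iff]; omega
  -- swapping `b` and `c` across the halves separates `a` from `b`
  refine ⟨lowerHalf k e, lowerHalf k (e.trans (Equiv.swap b c)), card_filter_lowerHalf k e,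
    card_filter_lowerHalf k _, e.symm a, e.symm b, ?_, ?_⟩
  · simp [lowerHalf, a, b]
  · simp [lowerHalf, Equiv.swap_apply_of_ne_of_ne hab hac, a, c]; omega

/-- sharpness in the Pachter–Speyer theorem: if `|X| = 2m - 2` (`m ≥ 3`)
then there are two positively edge-weighted phylogenetic `X`-trees with identical
`m`-subtree weight maps which are not isomorphic by any weight-preserving isomorphism
fixing `X`. -/
theorem subtree_weights_do_not_determine_tree
    {X : Type*} [Fintype X] (m : ℕ) (hm : 3 ≤ m)
    (hX : Fintype.card X = 2 * m - 2) :
    ∃ (N N' : ℕ) (G : SimpleGraph (Fin N)) (G' : SimpleGraph (Fin N'))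
      (f : X → Fin N) (f' : X → Fin N')
      (w : Sym2 (Fin N) → ℝ) (w' : Sym2 (Fin N') → ℝ),
      G.IsTree ∧ G'.IsTree ∧
      Function.Injective f ∧ Function.Injective f' ∧
      (∀ v, G.degree v = 1 ↔ v ∈ Set.range f) ∧
      (∀ v, G'.degree v = 1 ↔ v ∈ Set.range f') ∧
      (∀ v, v ∉ Set.range f → 3 ≤ G.degree v) ∧
      (∀ v, v ∉ Set.range f' → 3 ≤ G'.degree v) ∧
      (∀ e ∈ G.edgeSet, 0 < w e) ∧ (∀ e ∈ G'.edgeSet, 0 < w' e) ∧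
      -- the `m`-subtree weight maps agree ...
      (∀ R : Finset X, R.card = m →
        subtreeWeight G w (R.image f) = subtreeWeight G' w' (R.image f')) ∧
      -- ... but no weight-preserving isomorphism fixes `X`
      ¬ ∃ φ : G ≃g G', (∀ x : X, φ (f x) = f' x) ∧
          ∀ a b : Fin N, G.Adj a b → w' s(φ a, φ b) = w s(a, b) := by
  obtain ⟨k, rfl⟩ : ∃ k, m = k + 1 := ⟨m - 1, by omega⟩
  obtain ⟨σ, σ', hσ, hσ', x, y, hxy, hxy'⟩ := exists_halvings_separating (X := X) (k := k)
    (by omega) (by omega)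
  obtain ⟨N, G, ⟨φ⟩⟩ := exists_iso_fin (doubleStar σ)
  obtain ⟨N', G', ⟨φ'⟩⟩ := exists_iso_fin (doubleStar σ')
  have hT := (isPhylogeneticTree_doubleStar fun b => by rw [hσ b]; omega).iso φ
  have hT' := (isPhylogeneticTree_doubleStar fun b => by rw [hσ' b]; omega).iso φ'
  have hmeets : ∀ τ : X → Bool, (∀ b, #{x | τ x = b} = k) →
      ∀ R : Finset X, #R = k + 1 → ∀ b, ∃ x ∈ R, τ x = b := fun τ hτ R hR =>
    exists_mem_eq_of_card_filter_lt (by simp [hτ, hR])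
  refine ⟨N, N', G, G', φ ∘ Sum.inl, φ' ∘ Sum.inl, fun _ => 1, fun _ => 1, hT.isTree, hT'.isTree,
    hT.injective, hT'.injective, hT.degree_eq_one_iff, hT'.degree_eq_one_iff, hT.three_le_degree,
    hT'.three_le_degree, fun _ _ => one_pos, fun _ _ => one_pos, fun R hR => ?_, ?_⟩
  · rw [subtreeWeight_one_of_iso_doubleStar φ (hmeets σ hσ R hR),
      subtreeWeight_one_of_iso_doubleStar φ' (hmeets σ' hσ' R hR)]
  · rintro ⟨ψ, hψ, -⟩
    exact hxy' (doubleStar_sides_eq_of_iso ((φ.trans ψ).trans φ'.symm)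
      (fun z => by simpa using congrArg φ'.symm (hψ z)) hxy)
end
end

section
/- Let T be a positively edge-weighted phylogenetic X-tree with |X| = n, let 2 ≤ m ≤ n, let D be the m-subtree weight map of T, and let S_D(a,b) = Σ D({a,b} ∪ Y), the sum over all (m−2)-element subsets Y of X \ {a,b}. Then for all distinct leaves a, b ∈ X: S_D(a,ب b) = Σ_{e∈E(T)} c(e)·w(e), where c(e) = C(n−2, m−2) if e lies on the path from a to b, and c(e) = C(n−2, m−2) − C(|L_a(e)|−2, m−2) otherwise. Here C(·,·) denotes the binomial coefficient. -/
open SimpleGraph Finset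

attribute [local instance] Classical.propDecidable

noncomputable section

/-- `L_i(e)`: the set of leaves in the component of `T - e` containing `i`. -/
def leafSide {V : Type*} [Fintype V] (G : SimpleGraph V) (X : Finset V)
    (i : V) (e : Sym2 V) : Finset V :=
  X.filter fun x => (G.deleteEdges {e}).Reachable i x

/-- `S_D(i,j) = ∑_{Y ∈ C(X \ {i,j}, m-2)} D({i,j} ∪ Y)`. -/
def SDmap {V : Type*} [Fintype V] (G : SimpleGraph V) (w : Sym2 V → ℝ)
    (X : Finset V) (m : ℕ) (i j : V) : ℝ :=
  ∑ Y ∈ ((X.erase i).erase j).powersetCard (m - 2),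
    subtreeWeight G w (insert i (insert j Y))

/-- Binomial coefficient with integer arguments, `0` whenever `b < 0` or `a < b`. -/
def C (a b : ℤ) : ℤ := if 0 ≤ b ∧ b ≤ a then (a.toNat.choose b.toNat : ℤ) else 0

lemma onPath_iff {V : Type*} {G : SimpleGraph V} (hT : G.IsTree) {e : Sym2 V}
    (he : e ∈ G.edgeSet) (x y : V) :
    OnPath G x y e ↔ ¬(G.deleteEdges {e}).Reachable x y := by
  constructor
  · rintro ⟨p, hp, hep⟩ ⟨q⟩
    set q' : (G.deleteEdges {e}).Walk x y := (q.toPath : (G.deleteEdges {e}).Path x y).1 with hq'def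
    have hq : q'.IsPath := (q.toPath : (G.deleteEdges {e}).Path x y).2
    have hsub : ∀ e' ∈ q'.edges, e' ∈ G.edgeSet := fun e' h => by
      have := q'.edges_subset_edgeSet h
      rw [edgeSet_deleteEdges] at this
      exact this.1
    have htr : (q'.transfer G hsub).IsPath := hq.transfer hsub
    have := (hT.existsUnique_path x y).unique htr hp
    have hmem : e ∈ q'.edges := by
      rw [← Walk.edges_transfer q' hsub, this]; exact hep
    have := q'.edges_subset_edgeSet hmem
    rw [edgeSet_deleteEdges] at this
    exact this.2 rfl
  · intro hnr
    obtain ⟨p, hp⟩ := (hT.existsUnique_path x y).exists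
    refine ⟨p, hp, ?_⟩
    by_contra hne
    exact hnr ⟨p.toDeleteEdges {e}
      (by intro e' h hmem; rw [Set.mem_singleton_iff] at hmem; exact hne (hmem ▸ h))⟩

lemma C_cast (p q : ℕ) (hp : 2 ≤ p) (hq : 2 ≤ q) :
    ((C ((p:ℤ)-2) ((q:ℤ)-2) : ℤ) : ℝ) = ((p-2).choose (q-2) : ℝ) := by
  unfold C
  split_ifs with h
  · have h1 : ((p:ℤ)-2).toNat = p - 2 := by omega
    have h2 : ((q:ℤ)-2).toNat = q - 2 := by omega
    rw [h1, h2]; push_cast; ring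
  · have : p - 2 < q - 2 := by omega
    rw [Nat.choose_eq_zero_of_lt this]; simp

/-- Lemma 1 of Levy–Yoshida–Pachter: the coefficient of `w(e)` in
`S_D(a,b)` is `C(n-2, m-2)` for `e` on the path from `a` to `b`, and
`C(n-2, m-2) - C(|L_a(e)|-2, m-2)` otherwise. -/
theorem SD_edge_coefficients
    {V : Type*} [Fintype V] (G : SimpleGraph V) (X : Finset V)
    (hT : G.IsTree)
    (hleaf : ∀ v : V, G.degree v = 1 ↔ v ∈ X)
    (hint : ∀ v : V, v ∉ X → 3 ≤ G.degree v)
    (w : Sym2 V → ℝ) (hw : ∀ e ∈ G.edgeSet, 0 < w e)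
    (m : ℕ) (hm : 2 ≤ m) (hmn : m ≤ X.card)
    (a b : V) (ha : a ∈ X) (hb : b ∈ X) (hab : a ≠ b) :
    SDmap G w X m a b =
      ∑ e ∈ G.edgeFinset,
        (if OnPath G a b e then (C ((X.card : ℤ) - 2) ((m : ℤ) - 2) : ℝ)
         else (C ((X.card : ℤ) - 2) ((m : ℤ) - 2) : ℝ)
            - (C (((leafSide G X a e).card : ℤ) - 2) ((m : ℤ) - 2) : ℝ)) * w e := by
  classical
  have hn2 : 2 ≤ X.card := hm.trans hmn
  have hbA : b ∈ X.erase a := Finset.mem_erase.mpr ⟨hab.symm, hb⟩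
  have hAcard : ((X.erase a).erase b).card = X.card - 2 := by
    rw [Finset.card_erase_of_mem hbA, Finset.card_erase_of_mem ha]
    omega
  unfold SDmap subtreeWeight subtreeEdges
  simp only [Finset.sum_filter]
  rw [Finset.sum_comm]
  refine Finset.sum_congr rfl fun e he => ?_
  have heE : e ∈ G.edgeSet := mem_edgeFinset.mp he
  by_cases hop : OnPath G a b e
  · rw [if_pos hop,
      Finset.sum_congr rfl (fun Y _ => if_pos
        (⟨a, Finset.mem_insert_self _ _, b,
          Finset.mem_insert_of_mem (Finset.mem_insert_self _ _), hop⟩ :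
          ∃ x ∈ insert a (insert b Y), ∃ y ∈ insert a (insert b Y), OnPath G x y e)),
      Finset.sum_const, Finset.card_powersetCard, hAcard, nsmul_eq_mul,
      C_cast X.card m hn2 hm]
  · rw [if_neg hop]
    have hr : (G.deleteEdges {e}).Reachable a b :=
      not_not.mp (mt ((onPath_iff hT heE a b).mpr) hop)
    set p : V → Prop := fun x => (G.deleteEdges {e}).Reachable a x with hpdef
    have hQ : ∀ Y ∈ ((X.erase a).erase b).powersetCard (m-2),
        ((∃ x ∈ insert a (insert b Y), ∃ y ∈ insert a (insert b Y), OnPath G x y e)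
          ↔ ¬ ∀ y ∈ Y, p y) := by
      intro Y _
      constructor
      · rintro ⟨x, hx, y, hy, hxy⟩ hall
        rw [onPath_iff hT heE] at hxy
        have reach : ∀ z ∈ insert a (insert b Y), p z := by
          intro z hz
          rcases Finset.mem_insert.mp hz with rfl | hz
          · exact Reachable.refl _
          rcases Finset.mem_insert.mp hz with rfl | hz
          · exact hr
          · exact hall z hz
        exact hxy ((reach x hx).symm.trans (reach y hy))
      · intro h
        push_neg at h
        obtain ⟨y, hyY, hny⟩ := h
        exact ⟨a, Finset.mem_insert_self _ _, y,
          Finset.mem_insert_of_mem (Finset.mem_insert_of_mem hyY),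
          (onPath_iff hT heE a y).mpr hny⟩
    rw [Finset.sum_congr rfl (fun Y hY => if_congr (hQ Y hY) rfl rfl),
      ← Finset.sum_filter, Finset.sum_const, nsmul_eq_mul]
    congr 1
    have hsplit := Finset.card_filter_add_card_filter_not
      (s := ((X.erase a).erase b).powersetCard (m-2)) (p := fun Y => ∀ y ∈ Y, p y)
    have hfilt : (((X.erase a).erase b).powersetCard (m-2)).filter (fun Y => ∀ y ∈ Y, p y)
        = (((X.erase a).erase b).filter p).powersetCard (m-2) := by
      ext Y
      simp only [Finset.mem_filter, Finset.mem_powersetCard]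
      constructor
      · rintro ⟨⟨hYA, hYc⟩, hall⟩
        exact ⟨fun y hy => Finset.mem_filter.mpr ⟨hYA hy, hall y hy⟩, hYc⟩
      · rintro ⟨hYf, hYc⟩
        exact ⟨⟨fun y hy => (Finset.mem_filter.mp (hYf hy)).1, hYc⟩,
          fun y hy => (Finset.mem_filter.mp (hYf hy)).2⟩
    have haL : a ∈ X.filter p := Finset.mem_filter.mpr ⟨ha, Reachable.refl _⟩
    have hbL : b ∈ (X.filter p).erase a :=
      Finset.mem_erase.mpr ⟨hab.symm, Finset.mem_filter.mpr ⟨hb, hr⟩⟩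
    have hAf : ((X.erase a).erase b).filter p = ((X.filter p).erase a).erase b := by
      rw [Finset.filter_erase, Finset.filter_erase]
    have hLdef : leafSide G X a e = X.filter p := rfl
    have hL2 : 2 ≤ (X.filter p).card := by
      have h1 := Finset.card_erase_of_mem haL
      have h2 : 0 < ((X.filter p).erase a).card := Finset.card_pos.mpr ⟨b, hbL⟩
      omega
    have hLcard : (((X.erase a).erase b).filter p).card = (X.filter p).card - 2 := by
      rw [hAf, Finset.card_erase_of_mem hbL, Finset.card_erase_of_mem haL]
      omega
    have hLX : (X.filter p).card ≤ X.card := Finset.card_le_card (Finset.filter_subset _ _)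
    have h1 : ((((X.erase a).erase b).powersetCard (m-2)).filter (fun Y => ∀ y ∈ Y, p y)).card
        = ((X.filter p).card - 2).choose (m-2) := by
      rw [hfilt, Finset.card_powersetCard, hLcard]
    have h2 : (((X.erase a).erase b).powersetCard (m-2)).card = (X.card - 2).choose (m-2) := by
      rw [Finset.card_powersetCard, hAcard]
    have hcardQ : ((((X.erase a).erase b).powersetCard (m-2)).filter
          (fun Y => ¬ ∀ y ∈ Y, p y)).card
        = (X.card - 2).choose (m-2) - ((X.filter p).card - 2).choose (m-2) := by
      omega
    rw [hcardQ, hLdef, C_cast X.card m hn2 hm, C_cast (X.filter p).card m hL2 hm]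
    have hle : ((X.filter p).card - 2).choose (m-2) ≤ (X.card - 2).choose (m-2) :=
      Nat.choose_le_choose _ (by omega)
    push_cast [Nat.cast_sub hle]
    ring
end
end

section
/- Let T be a positively edge-weighted phylogenetic X-tree with |X| = n, let 2 ≤ m ≤ n, let D be the m-subtree weight map of T, and let S_D(i,j) = Σ D({i,j} ∪ Y), the sum over all (m−2)-element subsets Y of X \ {i,j}. If (a1,a2;a3,a4) is a tree quartet of T, then S_D(a1,a3) + S_D(a2,a4) = S_D(a1,a4) + S_D(a2,a3). -/
open SimpleGraph Finset

attribute [local instance] Classical.propDecidable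

noncomputable section

/-- `(i,j;k,l)` is a tree quartet: the (unique) path from `i` to `j` and the (unique) path
from `k` to `l` share no edges. -/
def IsQuartet {V : Type*} (G : SimpleGraph V) (i j k l : V) : Prop :=
  ∀ (p : G.Walk i j) (q : G.Walk k l), p.IsPath → q.IsPath →
    ∀ e ∈ p.edges, e ∉ q.edges

/-!
Expanding `D` edge by edge, `S_D(i,j) = ∑_e w(e) · #{Y | e ∈ [{i,j} ∪ Y]}`. An edge `e` misses
`[{i,j} ∪ Y]` exactly when `i`, `j` and all of `Y` lie in one component of `T - e`, so the count
is `C(n-2, m-2)` minus `C(|L_i(e)| - 2, m-2)` when `i` and `j` are on the same side of `e`, and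
minus nothing otherwise. For a tree quartet no edge separates both `a1` from `a2` and `a3` from
`a4`; in either remaining case the correction terms on the two sides of the identity agree.
-/

theorem Equivalence.ite_add_ite_eq_of_or {α M : Type*} [AddCommMonoid M] {r : α → α → Prop}
    [DecidableRel r] (hr : Equivalence r) {g : α → M} (hg : ∀ x y, r x y → g x = g y)
    {a₁ a₂ a₃ a₄ : α} (h : r a₁ a₂ ∨ r a₃ a₄) :
    ((if r a₁ a₃ then g a₁ else 0) + if r a₂ a₄ then g a₂ else 0) =
      (if r a₁ a₄ then g a₁ else 0) + if r a₂ a₃ then g a₂ else 0 := by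
  rcases h with h | h
  · have h₃ : r a₁ a₃ ↔ r a₂ a₃ := ⟨hr.trans (hr.symm h), hr.trans h⟩
    have h₄ : r a₁ a₄ ↔ r a₂ a₄ := ⟨hr.trans (hr.symm h), hr.trans h⟩
    simp only [h₃, h₄, hg _ _ h]
    exact add_comm _ _
  · have h₁ : r a₁ a₃ ↔ r a₁ a₄ := ⟨(hr.trans · h), (hr.trans · (hr.symm h))⟩
    have h₂ : r a₂ a₄ ↔ r a₂ a₃ := ⟨(hr.trans · (hr.symm h)), (hr.trans · h)⟩
    simp only [h₁, h₂]

section Tree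

variable {V : Type*} {G : SimpleGraph V}

theorem onPath_iff_not_reachable_deleteEdges (hT : G.IsTree) {a b : V} {e : Sym2 V} :
    OnPath G a b e ↔ ¬(G.deleteEdges {e}).Reachable a b := by
  cases e with
  | h u v =>
    rw [reachable_deleteEdges_iff_exists_walk, not_exists_not]
    constructor
    · rintro ⟨p, hp, he⟩ q
      have hq : q.toPath = ⟨p, hp⟩ := (hT.isAcyclic.subsingleton_path a b).elim _ _
      exact q.edges_toPath_subset_edges (hq ▸ he)
    · intro h
      obtain ⟨q⟩ := hT.connected.preconnected a b
      exact ⟨q.toPath, q.toPath.2, h _⟩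

theorem IsQuartet.reachable_deleteEdges_or (hT : G.IsTree) {a₁ a₂ a₃ a₄ : V}
    (hq : IsQuartet G a₁ a₂ a₃ a₄) (e : Sym2 V) :
    (G.deleteEdges {e}).Reachable a₁ a₂ ∨ (G.deleteEdges {e}).Reachable a₃ a₄ := by
  by_contra! h
  obtain ⟨p, hp, hep⟩ := (onPath_iff_not_reachable_deleteEdges hT).mpr h.1
  obtain ⟨q, hq', heq⟩ := (onPath_iff_not_reachable_deleteEdges hT).mpr h.2
  exact hq p q hp hq' e hep heq

variable [Fintype V]

theorem leafSide_eq_of_reachable (X : Finset V) {e : Sym2 V} {i j : V}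
    (h : (G.deleteEdges {e}).Reachable i j) : leafSide G X i e = leafSide G X j e :=
  filter_congr fun _ _ => ⟨h.symm.trans, h.trans⟩

theorem notMem_subtreeEdges_iff (hT : G.IsTree) {R : Finset V} {e : Sym2 V}
    (he : e ∈ G.edgeSet) :
    e ∉ subtreeEdges G R ↔ ∀ a ∈ R, ∀ b ∈ R, (G.deleteEdges {e}).Reachable a b := by
  simp [subtreeEdges, he, onPath_iff_not_reachable_deleteEdges hT]

theorem notMem_subtreeEdges_insert_insert_iff (hT : G.IsTree) {Y : Finset V} {e : Sym2 V}
    (he : e ∈ G.edgeSet) {i j : V} :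
    e ∉ subtreeEdges G (insert i (insert j Y)) ↔
      (G.deleteEdges {e}).Reachable i j ∧ ∀ y ∈ Y, (G.deleteEdges {e}).Reachable i y := by
  rw [notMem_subtreeEdges_iff hT he]
  constructor
  · intro h
    exact ⟨h i (mem_insert_self ..) j (by simp),
      fun y hy => h i (mem_insert_self ..) y (by simp [hy])⟩
  · rintro ⟨hij, hY⟩ a ha b hb
    have hi : ∀ x ∈ insert i (insert j Y), (G.deleteEdges {e}).Reachable i x := by
      simpa [hij] using hY
    exact (hi a ha).symm.trans (hi b hb)

theorem card_filter_notMem_subtreeEdges (hT : G.IsTree) (X : Finset V) (k : ℕ) {e : Sym2 V}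
    (he : e ∈ G.edgeSet) {i j : V} (hi : i ∈ X) (hj : j ∈ X) (hij : i ≠ j) :
    #{Y ∈ ((X.erase i).erase j).powersetCard k | e ∉ subtreeEdges G (insert i (insert j Y))} =
      if (G.deleteEdges {e}).Reachable i j then (#(leafSide G X i e) - 2).choose k else 0 := by
  simp only [notMem_subtreeEdges_insert_insert_iff hT he]
  split_ifs with hR
  · have hL : {Y ∈ ((X.erase i).erase j).powersetCard k |
          (G.deleteEdges {e}).Reachable i j ∧ ∀ y ∈ Y, (G.deleteEdges {e}).Reachable i y} =
          (((leafSide G X i e).erase i).erase j).powersetCard k := by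
      ext Y
      simp only [mem_filter, mem_powersetCard, subset_iff, leafSide, mem_erase, hR, true_and]
      grind
    have hiL : i ∈ leafSide G X i e := mem_filter.mpr ⟨hi, .rfl⟩
    have hjL : j ∈ (leafSide G X i e).erase i := mem_erase.mpr ⟨hij.symm, mem_filter.mpr ⟨hj, hR⟩⟩
    rw [hL, card_powersetCard, card_erase_of_mem hjL, card_erase_of_mem hiL, Nat.sub_sub]
  · rw [card_eq_zero, filter_eq_empty_iff]
    exact fun _ _ h => hR h.1

theorem SDmap_eq_sum_card_mul (w : Sym2 V → ℝ) (X : Finset V) (m : ℕ) (i j : V) :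
    SDmap G w X m i j = ∑ e ∈ G.edgeFinset,
      (#{Y ∈ ((X.erase i).erase j).powersetCard (m - 2) |
        e ∈ subtreeEdges G (insert i (insert j Y))} : ℝ) * w e := by
  have hweight : ∀ R : Finset V, subtreeWeight G w R =
      ∑ e ∈ G.edgeFinset, if e ∈ subtreeEdges G R then w e else 0 := fun R => by
    have hsub : subtreeEdges G R ⊆ G.edgeFinset := filter_subset _ _
    rw [sum_ite_mem, inter_eq_right.mpr hsub, subtreeWeight]
  simp only [SDmap, hweight]
  rw [sum_comm]
  refine sum_congr rfl fun e _ => ?_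
  rw [← sum_filter, sum_const, nsmul_eq_mul]

theorem SDmap_eq_sum_edgeFinset (hT : G.IsTree) (w : Sym2 V → ℝ) {X : Finset V} (m : ℕ)
    {i j : V} (hi : i ∈ X) (hj : j ∈ X) (hij : i ≠ j) :
    SDmap G w X m i j = ∑ e ∈ G.edgeFinset,
      (((#X - 2).choose (m - 2) : ℝ) - if (G.deleteEdges {e}).Reachable i j
        then ((#(leafSide G X i e) - 2).choose (m - 2) : ℝ) else 0) * w e := by
  rw [SDmap_eq_sum_card_mul]
  refine sum_congr rfl fun e he => ?_
  have hN : #(((X.erase i).erase j).powersetCard (m - 2)) = (#X - 2).choose (m - 2) := by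
    rw [card_powersetCard, card_erase_of_mem (mem_erase.mpr ⟨hij.symm, hj⟩),
      card_erase_of_mem hi, Nat.sub_sub]
  have hsplit := card_filter_add_card_filter_not (s := ((X.erase i).erase j).powersetCard (m - 2))
    (fun Y => e ∈ subtreeEdges G (insert i (insert j Y)))
  rw [card_filter_notMem_subtreeEdges hT X _ (mem_edgeFinset.mp he) hi hj hij, hN] at hsplit
  rw [← hsplit]
  push_cast
  ring

end Tree

theorem SD_quartet_identity_general
    {V : Type*} [Fintype V] (G : SimpleGraph V) (X : Finset V)
    (hT : G.IsTree)
    (w : Sym2 V → ℝ)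
    (m : ℕ)
    (a1 a2 a3 a4 : V) (h1 : a1 ∈ X) (h2 : a2 ∈ X) (h3 : a3 ∈ X) (h4 : a4 ∈ X)
    (h13 : a1 ≠ a3) (h14 : a1 ≠ a4)
    (h23 : a2 ≠ a3) (h24 : a2 ≠ a4)
    (hq : IsQuartet G a1 a2 a3 a4) :
    SDmap G w X m a1 a3 + SDmap G w X m a2 a4 =
      SDmap G w X m a1 a4 + SDmap G w X m a2 a3 := by
  simp only [SDmap_eq_sum_edgeFinset hT w m h1 h3 h13, SDmap_eq_sum_edgeFinset hT w m h2 h4 h24,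
    SDmap_eq_sum_edgeFinset hT w m h1 h4 h14, SDmap_eq_sum_edgeFinset hT w m h2 h3 h23,
    ← sum_add_distrib]
  refine sum_congr rfl fun e _ => ?_
  have key := (reachable_is_equivalence _).ite_add_ite_eq_of_or
    (g := fun i => ((#(leafSide G X i e) - 2).choose (m - 2) : ℝ))
    (fun _ _ h => by rw [leafSide_eq_of_reachable X h]) (hq.reachable_deleteEdges_or hT e)
  linear_combination (-w e) * key

/-- if `(a1,a2;a3,a4)` is a tree quartet of `T`, then
`S_D(a1,a3) + S_D(a2,a4) = S_D(a1,a4) + S_D(a2,a3)`. -/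
theorem SD_quartet_identity
    {V : Type*} [Fintype V] (G : SimpleGraph V) (X : Finset V)
    (hT : G.IsTree)
    (hleaf : ∀ v : V, G.degree v = 1 ↔ v ∈ X)
    (hint : ∀ v : V, v ∉ X → 3 ≤ G.degree v)
    (w : Sym2 V → ℝ) (hw : ∀ e ∈ G.edgeSet, 0 < w e)
    (m : ℕ) (hm : 2 ≤ m) (hmn : m ≤ X.card)
    (a1 a2 a3 a4 : V) (h1 : a1 ∈ X) (h2 : a2 ∈ X) (h3 : a3 ∈ X) (h4 : a4 ∈ X)
    (h12 : a1 ≠ a2) (h13 : a1 ≠ a3) (h14 : a1 ≠ a4)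
    (h23 : a2 ≠ a3) (h24 : a2 ≠ a4) (h34 : a3 ≠ a4)
    (hq : IsQuartet G a1 a2 a3 a4) :
    SDmap G w X m a1 a3 + SDmap G w X m a2 a4 =
      SDmap G w X m a1 a4 + SDmap G w X m a2 a3 :=
  SD_quartet_identity_general G X hT w m a1 a2 a3 a4 h1 h2 h3 h4 h13 h14 h23 h24 hq
end
end

section
/- Let T be a positively edge-weighted phylogenetic X-tree with |X| = n, let 2 ≤ m ≤ n, let D be the m-subtree weight map of T, and let S_D(i,j) = Σ D({i,j} ∪ Y), the sum over all (m−2)-element subsets Y of X \ {i,j}. Let (a,b;c,d) be a tree quartet of T whose splitting path (the set of edges lying both on the path from a to c and on the path from b to d) consists of exactly one edge e. Then S_D(a,b) + S_D(c,d) − S_D(a,c) − S_D(b,d) = −[C(|L_a(e)|−2, m−2) + C(|L_c(e)|−2, m−2)]·w(e), where C(·,·) denotes the binomial coefficient. -/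
open SimpleGraph Finset

attribute [local instance] Classical.propDecidable

noncomputable section

/-!
Write `i ~f j` when `i` and `j` lie on the same side of the edge `f`. A leaf set misses `f`
exactly when it lies on one side of `f`, so summing over edges instead of over `Y`,
`S_D(i,j) = ∑_f (C(n-2, m-2) - [i ~f j] C(|L_i(f)|-2, m-2)) w(f)`.
In the alternating sum the constant terms cancel. For `f ≠ e` the bracketed terms cancel too,
since `~f` is an equivalence relation with `a ~f b ∨ c ~f d` (quartet) and `a ~f c ∨ b ~f d`
(`f` is not on the splitting path). At `e`, which separates `a` from `c` and `b` from `d`, only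
`a ~e b` and `c ~e d` hold, because deleting an edge from a tree leaves two components.
-/

namespace SimpleGraph

variable {V : Type*} {G : SimpleGraph V}

theorem reachable_deleteEdges_or_of_walk {t u v : V} (p : G.Walk t u) :
    (G.deleteEdges {s(u, v)}).Reachable t u ∨ (G.deleteEdges {s(u, v)}).Reachable t v := by
  induction p with
  | nil => exact Or.inl .rfl
  | @cons t t' u h q ih =>
    by_cases he : s(t, t') = s(u, v)
    · rcases Sym2.eq_iff.mp he with ⟨rfl, -⟩ | ⟨rfl, -⟩
      · exact Or.inl .rfl
      · exact Or.inr .rfl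
    · have hadj : (G.deleteEdges {s(u, v)}).Adj t t' := by simp [h, he]
      exact ih.imp hadj.reachable.trans hadj.reachable.trans

theorem Connected.reachable_deleteEdges_of_not_reachable (hG : G.Connected) {e : Sym2 V}
    {x y z : V} (hxy : ¬ (G.deleteEdges {e}).Reachable x y)
    (hxz : ¬ (G.deleteEdges {e}).Reachable x z) : (G.deleteEdges {e}).Reachable y z := by
  induction e using Sym2.ind with
  | h u v =>
  have hside (t : V) := reachable_deleteEdges_or_of_walk (v := v) (hG t u).some
  rcases hside x with hx | hx <;> rcases hside y with hy | hy <;> rcases hside z with hz | hz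
  all_goals first
    | exact hy.trans hz.symm
    | exact absurd (hx.trans hy.symm) hxy
    | exact absurd (hx.trans hz.symm) hxz

theorem Connected.reachable_deleteEdges_and_of_or (hG : G.Connected) {e : Sym2 V}
    {a b c d : V} (hac : ¬ (G.deleteEdges {e}).Reachable a c)
    (hbd : ¬ (G.deleteEdges {e}).Reachable b d)
    (h : (G.deleteEdges {e}).Reachable a b ∨ (G.deleteEdges {e}).Reachable c d) :
    (G.deleteEdges {e}).Reachable a b ∧ (G.deleteEdges {e}).Reachable c d := by
  rcases h with h | h
  · exact ⟨h, hG.reachable_deleteEdges_of_not_reachable hac fun had => hbd (h.symm.trans had)⟩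
  · exact ⟨hG.reachable_deleteEdges_of_not_reachable (fun hca => hac hca.symm)
      (fun hcb => hbd (hcb.symm.trans h)), h⟩

theorem IsTree.onPath_iff_not_reachable_deleteEdges (hT : G.IsTree) {e : Sym2 V} {x y : V} :
    OnPath G x y e ↔ ¬ (G.deleteEdges {e}).Reachable x y := by
  constructor
  · rintro ⟨p, hp, hep⟩ hxy
    induction e using Sym2.ind with
    | h u v =>
    obtain ⟨q, hq⟩ := reachable_deleteEdges_iff_exists_walk.mp hxy
    have hpq : p = q.bypass :=
      congrArg Subtype.val ((hT.isAcyclic.subsingleton_path x y).elim ⟨p, hp⟩ q.toPath)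
    exact hq (q.edges_bypass_subset_edges (hpq ▸ hep))
  · intro hxy
    obtain ⟨p, hp⟩ := (hT.connected x y).some.toPath
    exact ⟨p, hp, p.mem_edges_of_not_reachable_deleteEdges hxy⟩

theorem IsTree.reachable_deleteEdges_or_of_isQuartet (hT : G.IsTree) {a b c d : V}
    (hq : IsQuartet G a b c d) (f : Sym2 V) :
    (G.deleteEdges {f}).Reachable a b ∨ (G.deleteEdges {f}).Reachable c d := by
  by_contra! h
  obtain ⟨p, hp, hfp⟩ := hT.onPath_iff_not_reachable_deleteEdges.mpr h.1
  obtain ⟨q, hq', hfq⟩ := hT.onPath_iff_not_reachable_deleteEdges.mpr h.2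
  exact hq p q hp hq' f hfp hfq

variable [Fintype V]

theorem IsTree.splitting_edge_iff (hT : G.IsTree) {a b c d : V} {e : Sym2 V}
    (hsplit : G.edgeFinset.filter (fun e' => OnPath G a c e' ∧ OnPath G b d e') = {e})
    (f : Sym2 V) :
    f ∈ G.edgeSet ∧ ¬ (G.deleteEdges {f}).Reachable a c ∧ ¬ (G.deleteEdges {f}).Reachable b d ↔
      f = e := by
  simpa [hT.onPath_iff_not_reachable_deleteEdges] using congrArg (f ∈ ·) hsplit

theorem leafSide_eq_of_reachable {X : Finset V} {e : Sym2 V} {i j : V}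
    (h : (G.deleteEdges {e}).Reachable i j) : leafSide G X i e = leafSide G X j e := by
  ext x
  simp only [leafSide, mem_filter]
  exact and_congr_right fun _ => ⟨h.symm.trans, h.trans⟩

theorem two_le_card_leafSide {X : Finset V} {e : Sym2 V} {i j : V} (hi : i ∈ X) (hj : j ∈ X)
    (hij : i ≠ j) (h : (G.deleteEdges {e}).Reachable i j) : 2 ≤ #(leafSide G X i e) := by
  rw [← card_pair hij]
  refine card_le_card fun x hx => ?_
  rcases mem_insert.mp hx with rfl | hx
  · exact mem_filter.mpr ⟨hi, .rfl⟩
  rw [mem_singleton.mp hx]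
  exact mem_filter.mpr ⟨hj, h⟩

theorem IsTree.not_mem_subtreeEdges_insert_iff (hT : G.IsTree) {f : Sym2 V}
    (hf : f ∈ G.edgeSet) {i : V} {S : Finset V} :
    f ∉ subtreeEdges G (insert i S) ↔ ∀ x ∈ S, (G.deleteEdges {f}).Reachable i x := by
  simp only [subtreeEdges, mem_filter, mem_edgeFinset, hf, true_and,
    hT.onPath_iff_not_reachable_deleteEdges, mem_insert, not_exists, not_and, not_not]
  constructor
  · exact fun h x hx => h i (.inl rfl) x (.inr hx)
  · intro h
    have hi (x) (hx : x = i ∨ x ∈ S) : (G.deleteEdges {f}).Reachable i x := by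
      rcases hx with rfl | hx
      exacts [.rfl, h x hx]
    exact fun x hx y hy => (hi x hx).symm.trans (hi y hy)

theorem IsTree.filter_not_mem_subtreeEdges (hT : G.IsTree) {f : Sym2 V} (hf : f ∈ G.edgeSet)
    (X : Finset V) (i j : V) (k : ℕ) :
    (((X.erase i).erase j).powersetCard k).filter
        (fun Y => f ∉ subtreeEdges G (insert i (insert j Y))) =
      if (G.deleteEdges {f}).Reachable i j then
        (((leafSide G X i f).erase i).erase j).powersetCard k
      else ∅ := by
  ext Y
  simp only [mem_filter, mem_powersetCard, hT.not_mem_subtreeEdges_insert_iff hf,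
    forall_mem_insert]
  split_ifs with hij
  · simp only [hij, true_and, subset_iff, mem_erase, leafSide]
    grind
  · simp [hij]

theorem IsTree.card_filter_mem_subtreeEdges (hT : G.IsTree) {f : Sym2 V} (hf : f ∈ G.edgeSet)
    {X : Finset V} {i j : V} (hi : i ∈ X) (hj : j ∈ X) (hij : i ≠ j) (k : ℕ) :
    (#((((X.erase i).erase j).powersetCard k).filter
        (fun Y => f ∈ subtreeEdges G (insert i (insert j Y)))) : ℝ) =
      (#X - 2).choose k -
        if (G.deleteEdges {f}).Reachable i j then ((#(leafSide G X i f) - 2).choose k : ℝ)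
        else 0 := by
  have hcard := card_filter_add_card_filter_not (s := ((X.erase i).erase j).powersetCard k)
    (fun Y => f ∈ subtreeEdges G (insert i (insert j Y)))
  rw [hT.filter_not_mem_subtreeEdges hf, card_powersetCard,
    card_erase_of_mem (by simp [hij.symm, hj]), card_erase_of_mem hi] at hcard
  split_ifs at hcard ⊢ with hR
  · have hiL : i ∈ leafSide G X i f := mem_filter.mpr ⟨hi, .rfl⟩
    have hjL : j ∈ (leafSide G X i f).erase i :=
      mem_erase.mpr ⟨hij.symm, mem_filter.mpr ⟨hj, hR⟩⟩
    rw [card_powersetCard, card_erase_of_mem hjL, card_erase_of_mem hiL] at hcard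
    simp only [Nat.sub_sub, Nat.reduceAdd] at hcard
    rw [eq_sub_iff_add_eq]
    exact_mod_cast hcard
  · simp only [Nat.sub_sub, Nat.reduceAdd, card_empty, add_zero] at hcard
    rw [hcard, sub_zero]

theorem IsTree.SDmap_eq_sum_edgeFinset (hT : G.IsTree) (w : Sym2 V → ℝ) {X : Finset V}
    (m : ℕ) {i j : V} (hi : i ∈ X) (hj : j ∈ X) (hij : i ≠ j) :
    SDmap G w X m i j = ∑ f ∈ G.edgeFinset,
      (((#X - 2).choose (m - 2) : ℝ) -
        if (G.deleteEdges {f}).Reachable i j then ((#(leafSide G X i f) - 2).choose (m - 2) : ℝ)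
        else 0) * w f := by
  set P := ((X.erase i).erase j).powersetCard (m - 2)
  calc SDmap G w X m i j
      = ∑ Y ∈ P, ∑ f ∈ G.edgeFinset,
          if f ∈ subtreeEdges G (insert i (insert j Y)) then w f else 0 := by
        have hsub (R : Finset V) : G.edgeFinset ∩ subtreeEdges G R = subtreeEdges G R :=
          inter_eq_right.mpr (filter_subset _ _)
        simp only [SDmap, subtreeWeight, sum_ite_mem, hsub, P]
    _ = ∑ f ∈ G.edgeFinset,
          #(P.filter fun Y => f ∈ subtreeEdges G (insert i (insert j Y))) * w f := by
        rw [sum_comm]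
        simp only [← sum_filter, sum_const, nsmul_eq_mul]
    _ = _ := sum_congr rfl fun f hf => by
        rw [hT.card_filter_mem_subtreeEdges (mem_edgeFinset.mp hf) hi hj hij]

end SimpleGraph

theorem Equivalence.ite_quartet_sum_eq_zero {α β : Type*} [AddCommGroup β] {r : α → α → Prop}
    [DecidableRel r] (hr : Equivalence r) {g : α → β} (hg : ∀ ⦃x y⦄, r x y → g x = g y)
    {a b c d : α} (h₁ : r a b ∨ r c d) (h₂ : r a c ∨ r b d) :
    ((if r a b then g a else 0) + (if r c d then g c else 0)
      - (if r a c then g a else 0) - (if r b d then g b else 0)) = 0 := by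
  have hsymm : ∀ ⦃x y⦄, r x y → r y x := fun _ _ => hr.symm
  have htrans : ∀ ⦃x y z⦄, r x y → r y z → r x z := fun _ _ _ => hr.trans
  split_ifs <;> grind

theorem C_natCast (a b : ℕ) : C a b = a.choose b := by
  unfold C
  split_ifs with h
  · simp
  · rw [Nat.choose_eq_zero_of_lt (by omega), Nat.cast_zero]

theorem C_natCast_sub_two {l m : ℕ} (hl : 2 ≤ l) (hm : 2 ≤ m) :
    C ((l : ℤ) - 2) ((m : ℤ) - 2) = (l - 2).choose (m - 2) := by
  rw [← C_natCast]
  congr 1 <;> omega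

theorem SD_single_splitting_edge_general
    {V : Type*} [Fintype V] (G : SimpleGraph V) (X : Finset V)
    (hT : G.IsTree)
    (w : Sym2 V → ℝ)
    (m : ℕ) (hm : 2 ≤ m)
    (a b c d : V) (ha : a ∈ X) (hb : b ∈ X) (hc : c ∈ X) (hd : d ∈ X)
    (hab : a ≠ b) (hac : a ≠ c)
    (hbd : b ≠ d) (hcd : c ≠ d)
    (hq : IsQuartet G a b c d)
    -- the splitting path of `(a,b;c,d)` consists of exactly the edge `e`
    (e : Sym2 V)
    (hsplit : G.edgeFinset.filter (fun e' => OnPath G a c e' ∧ OnPath G b d e') = {e}) :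
    SDmap G w X m a b + SDmap G w X m c d
        - SDmap G w X m a c - SDmap G w X m b d =
      - ((C (((leafSide G X a e).card : ℤ) - 2) ((m : ℤ) - 2) : ℝ) +
          (C (((leafSide G X c e).card : ℤ) - 2) ((m : ℤ) - 2) : ℝ)) * w e := by
  obtain ⟨he, hac_e, hbd_e⟩ := (hT.splitting_edge_iff hsplit e).mpr rfl
  obtain ⟨hab_e, hcd_e⟩ := hT.connected.reachable_deleteEdges_and_of_or hac_e hbd_e
    (hT.reachable_deleteEdges_or_of_isQuartet hq e)
  rw [hT.SDmap_eq_sum_edgeFinset w m ha hb hab, hT.SDmap_eq_sum_edgeFinset w m hc hd hcd,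
    hT.SDmap_eq_sum_edgeFinset w m ha hc hac, hT.SDmap_eq_sum_edgeFinset w m hb hd hbd,
    ← sum_add_distrib, ← sum_sub_distrib, ← sum_sub_distrib,
    sum_eq_single_of_mem e (mem_edgeFinset.mpr he)]
  · rw [if_pos hab_e, if_pos hcd_e, if_neg hac_e, if_neg hbd_e,
      C_natCast_sub_two (two_le_card_leafSide ha hb hab hab_e) hm,
      C_natCast_sub_two (two_le_card_leafSide hc hd hcd hcd_e) hm]
    push_cast
    ring
  · intro f hf hfe
    have hsplit_f : (G.deleteEdges {f}).Reachable a c ∨ (G.deleteEdges {f}).Reachable b d := by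
      by_contra! h
      exact hfe ((hT.splitting_edge_iff hsplit f).mp ⟨mem_edgeFinset.mp hf, h⟩)
    linear_combination (-w f) * (reachable_is_equivalence _).ite_quartet_sum_eq_zero
      (g := fun x => ((#(leafSide G X x f) - 2).choose (m - 2) : ℝ))
      (fun x y hxy => by rw [leafSide_eq_of_reachable hxy])
      (hT.reachable_deleteEdges_or_of_isQuartet hq f) hsplit_f

/-- Lemma 3 of Levy–Yoshida–Pachter: if the splitting path of the tree
quartet `(a,b;c,d)` consists of the single edge `e`, then
`S_D(a,b) + S_D(c,d) - S_D(a,c) - S_D(b,d)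
  = -(C(|L_a(e)|-2, m-2) + C(|L_c(e)|-2, m-2))·w(e)`. -/
theorem SD_single_splitting_edge
    {V : Type*} [Fintype V] (G : SimpleGraph V) (X : Finset V)
    (hT : G.IsTree)
    (hleaf : ∀ v : V, G.degree v = 1 ↔ v ∈ X)
    (hint : ∀ v : V, v ∉ X → 3 ≤ G.degree v)
    (w : Sym2 V → ℝ) (hw : ∀ e ∈ G.edgeSet, 0 < w e)
    (m : ℕ) (hm : 2 ≤ m) (hmn : m ≤ X.card)
    (a b c d : V) (ha : a ∈ X) (hb : b ∈ X) (hc : c ∈ X) (hd : d ∈ X)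
    (hab : a ≠ b) (hac : a ≠ c) (had : a ≠ d)
    (hbc : b ≠ c) (hbd : b ≠ d) (hcd : c ≠ d)
    (hq : IsQuartet G a b c d)
    -- the splitting path of `(a,b;c,d)` consists of exactly the edge `e`
    (e : Sym2 V)
    (hsplit : G.edgeFinset.filter (fun e' => OnPath G a c e' ∧ OnPath G b d e') = {e}) :
    SDmap G w X m a b + SDmap G w X m c d
        - SDmap G w X m a c - SDmap G w X m b d =
      - ((C (((leafSide G X a e).card : ℤ) - 2) ((m : ℤ) - 2) : ℝ) +
          (C (((leafSide G X c e).card : ℤ) - 2) ((m : ℤ) - 2) : ℝ)) * w e :=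
  SD_single_splitting_edge_general G X hT w m hm a b c d ha hb hc hd hab hac hbd hcd hq e hsplit
end
end
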